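/- arXiv:2305.05129 — 9 statements merged into one kernel-verified Lean document; each statement's English description precedes it below -/
import Mathlib

section
/- Let A = (Q, δ, s) be an NFA whose source s has no in-going transitions and in which every state is reachable from s, let P be a forward-stable partition for A, and let u and v belong to the same part of P. Then S_u = S_v. -/
/-- The image of a set of states `S` under the transitions labeled `a`. -/
def deltaSet {Q A : Type*} (δ : Q → A → Set Q) (a : A) (S : Set Q) : Set Q :=
  ⋃ u ∈ S, δ u a

/-- Extension of the transition function to strings (lists of letters). -/
def deltaStr {Q A : Type*} (δ : Q → A → Set Q) : Q → List A → Set Q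
  | v, [] => {v}
  | v, a :: w => ⋃ x ∈ δ v a, deltaStr δ x w

/-- `reach δ s v` is the set `S_v` of strings reaching `v` from the source `s`. -/
def reach {Q A : Type*} (δ : Q → A → Set Q) (s v : Q) : Set (List A) :=
  {α | v ∈ deltaStr δ s α}

/-- `S` is forward-stable with respect to `T`. -/
def FwdStable {Q A : Type*} (δ : Q → A → Set Q) (S T : Set Q) : Prop :=
  ∀ a, S ⊆ deltaSet δ a T ∨ S ∩ deltaSet δ a T = ∅

/-- `P` is a forward-stable partition for the NFA `(Q, δ, s)`. -/
def FwdStablePartition {Q A : Type*} (δ : Q → A → Set Q) (P : Set (Set Q)) : Prop :=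
  Setoid.IsPartition P ∧ ∀ S ∈ P, ∀ T ∈ P, FwdStable δ S T


theorem deltaStr_append {Q A : Type*} (δ : Q → A → Set Q) (q : Q) (α : List A) (a : A) :
    deltaStr δ q (α ++ [a]) = deltaSet δ a (deltaStr δ q α) := by
  induction α generalizing q with
  | nil => simp [deltaStr, deltaSet]
  | cons b β ih =>
    ext w
    simp only [List.cons_append, deltaStr, List.append_eq, ih, deltaSet, Set.mem_iUnion]
    constructor
    · rintro ⟨x, hx, y, hy, hw⟩
      exact ⟨y, ⟨x, hx, hy⟩, hw⟩
    · rintro ⟨y, ⟨x, hx, hy⟩, hw⟩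
      exact ⟨x, hx, y, hy, hw⟩

theorem deltaStr_pred {Q A : Type*} (δ : Q → A → Set Q) (α : List A) :
    ∀ v w : Q, w ∈ deltaStr δ v α → w = v ∨ ∃ x a, w ∈ δ x a := by
  induction α with
  | nil => intro v w h; exact Or.inl h
  | cons a β ih =>
    intro v w h
    simp only [deltaStr, Set.mem_iUnion] at h
    obtain ⟨x, hx, hw⟩ := h
    rcases ih x w hw with rfl | h
    · exact Or.inr ⟨v, a, hx⟩
    · exact Or.inr h

/-- If `P` is a forward-stable partition for an NFA whose source has no in-going
transitions and in which every state is reachable from the source, then any two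
states in the same part of `P` are reached by the same set of strings. -/
theorem stmt0 {Q A : Type*} [Fintype Q] [Fintype A] [LinearOrder A]
    (δ : Q → A → Set Q) (s : Q)
    (hs : ∀ u a, s ∉ δ u a)
    (hreach : ∀ v : Q, ∃ α, v ∈ deltaStr δ s α)
    (P : Set (Set Q)) (hP : FwdStablePartition δ P)
    (C : Set Q) (hC : C ∈ P) (u v : Q) (hu : u ∈ C) (hv : v ∈ C) :
    reach δ s u = reach δ s v := by
  have key : ∀ (α : List A) (T : Set Q), T ∈ P →
      T ⊆ deltaStr δ s α ∨ T ∩ deltaStr δ s α = ∅ := by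
    intro α
    induction α using List.reverseRecOn with
    | nil =>
      intro T hT
      by_cases hsT : s ∈ T
      · left
        intro w hw
        simp only [deltaStr, Set.mem_singleton_iff]
        by_contra hws
        obtain ⟨β, hβ⟩ := hreach w
        rcases deltaStr_pred δ β s w hβ with rfl | ⟨x, a, hxa⟩
        · exact hws rfl
        · obtain ⟨T', ⟨hT'P, hxT'⟩, _⟩ := hP.1.2 x
          rcases hP.2 T hT T' hT'P a with hsub | hdisj
          · have h2 := hsub hsT
            simp only [deltaSet, Set.mem_iUnion] at h2
            obtain ⟨y, _, hy⟩ := h2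
            exact hs y a hy
          · have : w ∈ T ∩ deltaSet δ a T' := by
              refine ⟨hw, ?_⟩
              simp only [deltaSet, Set.mem_iUnion]
              exact ⟨x, hxT', hxa⟩
            rw [hdisj] at this
            exact this
      · right
        ext w
        simp only [Set.mem_inter_iff, deltaStr, Set.mem_singleton_iff, Set.mem_empty_iff_false,
          iff_false, not_and]
        rintro hw rfl
        exact hsT hw
    | append_singleton β a ih =>
      intro T hT
      rw [deltaStr_append]
      by_cases hne : T ∩ deltaSet δ a (deltaStr δ s β) = ∅
      · exact Or.inr hne
      · left
        obtain ⟨w, hwT, hwD⟩ := Set.nonempty_iff_ne_empty.2 hne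
        simp only [deltaSet, Set.mem_iUnion] at hwD
        obtain ⟨x, hxβ, hwx⟩ := hwD
        obtain ⟨T', ⟨hT'P, hxT'⟩, _⟩ := hP.1.2 x
        have hT'sub : T' ⊆ deltaStr δ s β := by
          rcases ih T' hT'P with h | h
          · exact h
          · exact absurd h (by
              intro h
              have : x ∈ T' ∩ deltaStr δ s β := ⟨hxT', hxβ⟩
              rw [h] at this; exact this)
        rcases hP.2 T hT T' hT'P a with hsub | hdisj
        · refine hsub.trans ?_
          intro y hy
          simp only [deltaSet, Set.mem_iUnion] at hy ⊢
          obtain ⟨z, hz, hyz⟩ := hy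
          exact ⟨z, hT'sub hz, hyz⟩
        · exfalso
          have : w ∈ T ∩ deltaSet δ a T' := by
            refine ⟨hwT, ?_⟩
            simp only [deltaSet, Set.mem_iUnion]
            exact ⟨x, hxT', hwx⟩
          rw [hdisj] at this
          exact this
  ext α
  simp only [reach, Set.mem_setOf_eq]
  constructor <;> intro h
  · rcases key α C hC with hsub | hdisj
    · exact hsub hv
    · exact absurd (Set.mem_inter hu h) (by rw [hdisj]; exact id)
  · rcases key α C hC with hsub | hdisj
    · exact hsub hu
    · exact absurd (Set.mem_inter hv h) (by rw [hdisj]; exact id)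
end

section
/- Let A = (Q, δ, s) be an NFA and let B be any bisimulation on A⁻¹. Then the partition P_B of Q whose parts are the weakly connected components of the directed graph (Q, B) is forward-stable for A. -/
/-- `B` is a bisimulation on the NFA with transition function `δ`. -/
def IsBisim {Q A : Type*} (δ : Q → A → Set Q) (B : Q → Q → Prop) : Prop :=
  ∀ u v, B u v → ∀ a : A,
    (∀ u' ∈ δ u a, ∃ v' ∈ δ v a, B u' v') ∧
    (∀ v' ∈ δ v a, ∃ u' ∈ δ u a, B u' v')

/-- The reversed transition function, defining the NFA `A⁻¹`. -/
def deltaInv {Q A : Type*} (δ : Q → A → Set Q) : Q → A → Set Q :=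
  fun u a => {w | u ∈ δ w a}

/-- If `B` is a bisimulation on `A⁻¹`, then the partition of `Q` into the weakly
connected components of the directed graph `(Q, B)` (i.e. the equivalence
classes of the equivalence closure of `B`) is forward-stable for `A`. -/
theorem stmt3 {Q A : Type*} [Fintype Q] [Fintype A] [LinearOrder A]
    (δ : Q → A → Set Q) (s : Q)
    (B : Q → Q → Prop) (hB : IsBisim (deltaInv δ) B) :
    FwdStablePartition δ {C | ∃ u, C = {v | Relation.EqvGen B u v}} := by
  have hEq : Equivalence (Relation.EqvGen B) := Relation.EqvGen.is_equivalence B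
  -- invariance of membership in deltaSet under EqvGen B
  have key : ∀ (a : A) (w : Q) (x y : Q), Relation.EqvGen B x y →
      (x ∈ deltaSet δ a {v | Relation.EqvGen B w v} ↔
       y ∈ deltaSet δ a {v | Relation.EqvGen B w v}) := by
    intro a w x y hxy
    induction hxy with
    | rel x y h =>
      constructor
      · intro hx
        simp only [deltaSet, Set.mem_iUnion] at hx ⊢
        obtain ⟨t, ht, hxt⟩ := hx
        obtain ⟨t', ht', hBtt'⟩ := (hB x y h a).1 t hxt
        exact ⟨t', hEq.trans ht (Relation.EqvGen.rel _ _ hBtt'), ht'⟩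
      · intro hy
        simp only [deltaSet, Set.mem_iUnion] at hy ⊢
        obtain ⟨t, ht, hyt⟩ := hy
        obtain ⟨t', ht', hBt't⟩ := (hB x y h a).2 t hyt
        exact ⟨t', hEq.trans ht (hEq.symm (Relation.EqvGen.rel _ _ hBt't)), ht'⟩
    | refl x => exact Iff.rfl
    | symm x y _ ih => exact ih.symm
    | trans x y z _ _ ih1 ih2 => exact ih1.trans ih2
  constructor
  · -- partition
    have := Setoid.isPartition_classes (Relation.EqvGen.setoid B)
    convert this using 1
    ext C
    constructor
    · rintro ⟨u, rfl⟩
      exact ⟨u, by ext x; exact ⟨fun h => hEq.symm h, fun h => hEq.symm h⟩⟩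
    · rintro ⟨u, rfl⟩
      exact ⟨u, by ext x; exact ⟨fun h => hEq.symm h, fun h => hEq.symm h⟩⟩
  · rintro S ⟨u, rfl⟩ T ⟨w, rfl⟩ a
    by_cases hu : u ∈ deltaSet δ a {v | Relation.EqvGen B w v}
    · left
      intro x hx
      exact (key a w u x hx).mp hu
    · right
      ext x
      simp only [Set.mem_inter_iff, Set.mem_empty_iff_false, iff_false, not_and]
      intro hx hxd
      exact hu ((key a w u x hx).mpr hxd)
end

section
/- Let A = (Q, δ, s) be an NFA and let P be a forward-stable partition for A. Then the relation B_P := {(u, v) ∈ Q × Q : u and v lie in the same part of P} is a bisimulation on A⁻¹. -/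
lemma key {Q A : Type*} (δ : Q → A → Set Q) (P : Set (Set Q))
    (hP : FwdStablePartition δ P) {C : Set Q} (hC : C ∈ P) {u v : Q}
    (hu : u ∈ C) (hv : v ∈ C) (a : A) :
    ∀ u' ∈ deltaInv δ u a, ∃ v' ∈ deltaInv δ v a, ∃ C' ∈ P, u' ∈ C' ∧ v' ∈ C' := by
  intro u' hu'
  obtain ⟨C', ⟨hC', hu'C⟩, _⟩ := hP.1.2 u'
  have hstab := hP.2 C hC C' hC' a
  have huin : u ∈ deltaSet δ a C' := Set.mem_biUnion hu'C hu'
  rcases hstab with h | h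
  · obtain ⟨v', hv'C, hvδ⟩ := Set.mem_iUnion₂.1 (h hv)
    exact ⟨v', hvδ, C', hC', hu'C, hv'C⟩
  · exact absurd (Set.mem_inter hu huin) (by simp [h])

/-- If `P` is a forward-stable partition for `A`, the relation relating two
states iff they lie in the same part of `P` is a bisimulation on `A⁻¹`. -/
theorem stmt4 {Q A : Type*} [Fintype Q] [Fintype A] [LinearOrder A]
    (δ : Q → A → Set Q) (s : Q)
    (P : Set (Set Q)) (hP : FwdStablePartition δ P) :
    IsBisim (deltaInv δ) (fun u v => ∃ C ∈ P, u ∈ C ∧ v ∈ C) := by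
  intro u v ⟨C, hC, hu, hv⟩ a
  constructor
  · exact key δ P hP hC hu hv a
  · intro v' hv'
    obtain ⟨u', h1, C', h2, h3, h4⟩ := key δ P hP hC hv hu a v' hv'
    exact ⟨u', h1, C', h2, h4, h3⟩
end

section
/- Let A = (Q, δ, s) be an NFA. The bisimilarity of A⁻¹ (the union of all bisimulations on A⁻¹) is an equivalence relation on Q, the partition P_∼ of Q into its equivalence classes is forward-stable for A, and every forward-stable partition of A is a refinement of P_∼. Consequently, P_∼ is the unique coarsest forward-stable partition of A (the forward-stable partition with fewest parts). -/
/-- `P'` is a refinement of `P`: every part of `P'` is contained in a part of `P`. -/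
def Refines {Q : Type*} (P' P : Set (Set Q)) : Prop :=
  ∀ C ∈ P', ∃ D ∈ P, C ⊆ D

/-- The bisimilarity of an NFA: the union of all bisimulations on it. -/
def Bisimilarity {Q A : Type*} (δ : Q → A → Set Q) (u v : Q) : Prop :=
  ∃ B, IsBisim δ B ∧ B u v

section Aux

variable {Q A : Type*}

lemma bisim_equivalence (δ : Q → A → Set Q) : Equivalence (Bisimilarity δ) := by
  constructor
  · intro u
    refine ⟨Eq, ?_, rfl⟩
    intro u v h a; subst h
    exact ⟨fun u' hu' => ⟨u', hu', rfl⟩, fun v' hv' => ⟨v', hv', rfl⟩⟩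
  · rintro u v ⟨B, hB, huv⟩
    refine ⟨fun x y => B y x, ?_, huv⟩
    intro x y h a
    exact ⟨fun x' hx' => (hB y x h a).2 x' hx', fun y' hy' => (hB y x h a).1 y' hy'⟩
  · rintro u v w ⟨B, hB, huv⟩ ⟨C, hC, hvw⟩
    refine ⟨fun x z => ∃ y, B x y ∧ C y z, ?_, v, huv, hvw⟩
    rintro x z ⟨y, hxy, hyz⟩ a
    constructor
    · intro x' hx'
      obtain ⟨y', hy', hBy⟩ := (hB x y hxy a).1 x' hx'
      obtain ⟨z', hz', hCz⟩ := (hC y z hyz a).1 y' hy'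
      exact ⟨z', hz', y', hBy, hCz⟩
    · intro z' hz'
      obtain ⟨y', hy', hCy⟩ := (hC y z hyz a).2 z' hz'
      obtain ⟨x', hx', hBx⟩ := (hB x y hxy a).2 y' hy'
      exact ⟨x', hx', y', hBx, hCy⟩

lemma mem_deltaSet {δ : Q → A → Set Q} {a : A} {S : Set Q} {v : Q} :
    v ∈ deltaSet δ a S ↔ ∃ u ∈ S, v ∈ δ u a := by
  simp [deltaSet]

lemma part_eq {P : Set (Set Q)} (hP : Setoid.IsPartition P)
    {C D : Set Q} (hC : C ∈ P) (hD : D ∈ P) {x : Q} (hxC : x ∈ C) (hxD : x ∈ D) : C = D := by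
  obtain ⟨b, _, hb⟩ := hP.2 x
  rw [hb C ⟨hC, hxC⟩, hb D ⟨hD, hxD⟩]

/-- The bisimilarity classes form a partition. -/
lemma classes_partition (δ : Q → A → Set Q) :
    Setoid.IsPartition {C | ∃ u, C = {v | Bisimilarity (deltaInv δ) u v}} := by
  have E := bisim_equivalence (deltaInv δ)
  constructor
  · rintro ⟨u, hu⟩
    have : u ∈ (∅ : Set Q) := by rw [hu]; exact E.refl u
    exact this
  · intro x
    refine ⟨{v | Bisimilarity (deltaInv δ) x v}, ⟨⟨x, rfl⟩, E.refl x⟩, ?_⟩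
    rintro C ⟨⟨u, rfl⟩, hx⟩
    ext v
    simp only [Set.mem_setOf_eq]
    exact ⟨fun h => E.trans (E.symm hx) h, fun h => E.trans hx h⟩

/-- Forward stability of the bisimilarity-class partition. -/
lemma classes_fwdStable (δ : Q → A → Set Q) :
    FwdStablePartition δ {C | ∃ u, C = {v | Bisimilarity (deltaInv δ) u v}} := by
  have E := bisim_equivalence (deltaInv δ)
  refine ⟨classes_partition δ, ?_⟩
  rintro S ⟨u₀, rfl⟩ T ⟨w₀, rfl⟩ a
  by_cases hne : {v | Bisimilarity (deltaInv δ) u₀ v} ∩ deltaSet δ a {v | Bisimilarity (deltaInv δ) w₀ v} = ∅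
  · exact Or.inr hne
  left
  obtain ⟨u, hu⟩ := Set.nonempty_iff_ne_empty.2 hne
  obtain ⟨huS, huD⟩ := hu
  obtain ⟨t, htT, hut⟩ := mem_deltaSet.1 huD
  intro v hvS
  -- u ~ v
  have huv : Bisimilarity (deltaInv δ) u v := E.trans (E.symm huS) hvS
  obtain ⟨B, hB, hBuv⟩ := huv
  have ht : t ∈ deltaInv δ u a := hut
  obtain ⟨t', ht', hBtt'⟩ := (hB u v hBuv a).1 t ht
  refine mem_deltaSet.2 ⟨t', ?_, ht'⟩
  exact E.trans htT ⟨B, hB, hBtt'⟩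

/-- Every forward-stable partition refines the bisimilarity partition. -/
lemma fwd_refines (δ : Q → A → Set Q) (P : Set (Set Q)) (hP : FwdStablePartition δ P) :
    Refines P {C | ∃ u, C = {v | Bisimilarity (deltaInv δ) u v}} := by
  have step : ∀ u v, (∃ C ∈ P, u ∈ C ∧ v ∈ C) → ∀ a,
      ∀ u' ∈ deltaInv δ u a, ∃ v' ∈ deltaInv δ v a, ∃ C ∈ P, u' ∈ C ∧ v' ∈ C := by
    rintro u v ⟨C, hC, huC, hvC⟩ a u' hu'
    obtain ⟨D, ⟨hD, hu'D⟩, _⟩ := hP.1.2 u'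
    have huDel : u ∈ deltaSet δ a D := mem_deltaSet.2 ⟨u', hu'D, hu'⟩
    rcases hP.2 C hC D hD a with h | h
    · obtain ⟨v', hv'D, hv'⟩ := mem_deltaSet.1 (h hvC)
      exact ⟨v', hv', D, hD, hu'D, hv'D⟩
    · exact absurd (Set.mem_inter huC huDel) (by rw [h]; exact not_false)
  have hbisim : IsBisim (deltaInv δ) (fun u v => ∃ C ∈ P, u ∈ C ∧ v ∈ C) := by
    intro u v h a
    refine ⟨step u v h a, ?_⟩
    intro v' hv'
    obtain ⟨C, hC, huC, hvC⟩ := h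
    obtain ⟨u', hu', C', hC', hv'C', hu'C'⟩ := step v u ⟨C, hC, hvC, huC⟩ a v' hv'
    exact ⟨u', hu', C', hC', hu'C', hv'C'⟩
  intro C hC
  have hCne : C.Nonempty := by
    rcases Set.eq_empty_or_nonempty C with h | h
    · exact absurd (h ▸ hC) hP.1.1
    · exact h
  obtain ⟨u, hu⟩ := hCne
  refine ⟨{v | Bisimilarity (deltaInv δ) u v}, ⟨u, rfl⟩, ?_⟩
  intro v hv
  exact ⟨fun x y => ∃ C ∈ P, x ∈ C ∧ y ∈ C, hbisim, C, hC, hu, hv⟩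

lemma refines_antisymm {P P' : Set (Set Q)} (hP : Setoid.IsPartition P)
    (hP' : Setoid.IsPartition P') (h1 : Refines P P') (h2 : Refines P' P) : P = P' := by
  have key : ∀ {R S : Set (Set Q)}, Setoid.IsPartition R → Setoid.IsPartition S →
      Refines R S → Refines S R → ∀ C ∈ R, C ∈ S := by
    intro R S hR hS hRS hSR C hC
    obtain ⟨D, hD, hCD⟩ := hRS C hC
    obtain ⟨C', hC', hDC'⟩ := hSR D hD
    have hCne : C.Nonempty := by
      rcases Set.eq_empty_or_nonempty C with h | h
      · exact absurd (h ▸ hC) hR.1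
      · exact h
    obtain ⟨x, hx⟩ := hCne
    have : C = C' := part_eq hR hC hC' hx (hDC' (hCD hx))
    have hDC : D ⊆ C := this ▸ hDC'
    have : C = D := Set.Subset.antisymm hCD hDC
    exact this ▸ hD
  ext C
  exact ⟨fun h => key hP hP' h1 h2 C h, fun h => key hP' hP h2 h1 C h⟩

end Aux

/-- The bisimilarity of `A⁻¹` is an equivalence relation, its partition into
equivalence classes is forward-stable for `A`, every forward-stable partition
of `A` refines it, and it is the unique such (i.e. the unique coarsest)
forward-stable partition of `A`. -/
theorem stmt5 {Q A : Type*} [Fintype Q] [Fintype A] [LinearOrder A]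
    (δ : Q → A → Set Q) (s : Q) :
    Equivalence (Bisimilarity (deltaInv δ)) ∧
    FwdStablePartition δ {C | ∃ u, C = {v | Bisimilarity (deltaInv δ) u v}} ∧
    (∀ P, FwdStablePartition δ P →
      Refines P {C | ∃ u, C = {v | Bisimilarity (deltaInv δ) u v}}) ∧
    (∀ P, FwdStablePartition δ P → (∀ P', FwdStablePartition δ P' → Refines P' P) →
      P = {C | ∃ u, C = {v | Bisimilarity (deltaInv δ) u v}}) := by

  refine ⟨bisim_equivalence _, classes_fwdStable δ, fwd_refines δ, ?_⟩
  intro P hP hcoarse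
  exact refines_antisymm hP.1 (classes_partition δ) (fwd_refines δ P hP)
    (hcoarse _ (classes_fwdStable δ))
end

section
/- Let A = (Q, δ, s) be an input-consistent Wheeler NFA whose source s has no in-going transitions and in which every state is reachable from s. Then A is quasi-Wheeler, i.e., there exists a Wheeler preorder on A. -/
/-- `lt` is a Wheeler order on the NFA `(Q, δ, s)`: a strict total order putting
the source first and satisfying the two Wheeler axioms. -/
def IsWheelerOrder {Q A : Type*} [LT A] (δ : Q → A → Set Q) (s : Q)
    (lt : Q → Q → Prop) : Prop :=
  (∀ x, ¬ lt x x) ∧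
  (∀ x y z, lt x y → lt y z → lt x z) ∧
  (∀ x y, x ≠ y → lt x y ∨ lt y x) ∧
  (∀ v, v ≠ s → lt s v) ∧
  (∀ u u' v v' (a a' : A), v ∈ δ u a → v' ∈ δ u' a' →
    (a < a' → lt v v') ∧ (a = a' → lt u u' → v ≠ v' → lt v v'))

/-- The equivalence classes of the equivalence relation induced by
the total preorder `le` (`u ∼ v` iff `le u v` and `le v u`). -/
def simClasses {Q : Type*} (le : Q → Q → Prop) : Set (Set Q) :=
  {C | ∃ u, C = {v | le u v ∧ le v u}}

/-- `le` is a Wheeler preorder on the NFA `(Q, δ, s)`: a total preorder whose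
induced partition `Q/∼` is the coarsest forward-stable partition and whose
quotient automaton `A/∼` is Wheeler under the induced strict total order. -/
def IsWheelerPreorder {Q A : Type*} [LT A] (δ : Q → A → Set Q) (s : Q)
    (le : Q → Q → Prop) : Prop :=
  -- `le` is a total preorder
  (∀ x, le x x) ∧
  (∀ x y z, le x y → le y z → le x z) ∧
  (∀ x y, le x y ∨ le y x) ∧
  -- the induced partition is the coarsest forward-stable partition
  (FwdStablePartition δ (simClasses le) ∧
    ∀ P, FwdStablePartition δ P → Refines P (simClasses le)) ∧
  -- the quotient automaton is Wheeler under the induced strict total order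
  IsWheelerOrder
    (fun (C : {C : Set Q // C ∈ simClasses le}) (a : A) =>
      {D : {C : Set Q // C ∈ simClasses le} | ∃ u ∈ C.1, ∃ v ∈ D.1, v ∈ δ u a})
    ⟨{v | le s v ∧ le v s}, ⟨s, rfl⟩⟩
    (fun C D => ∃ u ∈ C.1, ∃ v ∈ D.1, le u v ∧ ¬ le v u)

section Aux

variable {Q A : Type*}

/-- The family of equivalence classes of a relation. -/
def eqCls (e : Q → Q → Prop) : Set (Set Q) := {C | ∃ u, C = {v | e u v}}

lemma cls_eq_cls {e : Q → Q → Prop} (hsym : ∀ x y, e x y → e y x)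
    (htr : ∀ x y z, e x y → e y z → e x z) {u w : Q} (h : e u w) :
    {v | e u v} = {v | e w v} := by
  ext v; exact ⟨fun hv => htr _ _ _ (hsym _ _ h) hv, fun hv => htr _ _ _ h hv⟩

lemma isPartition_eqCls {e : Q → Q → Prop} (hrefl : ∀ x, e x x)
    (hsym : ∀ x y, e x y → e y x)
    (htr : ∀ x y z, e x y → e y z → e x z) :
    Setoid.IsPartition (eqCls e) := by
  constructor
  · rintro ⟨u, hu⟩
    have : u ∈ (∅ : Set Q) := hu ▸ hrefl u
    exact this
  · intro a
    refine ⟨{v | e a v}, ⟨⟨a, rfl⟩, hrefl a⟩, ?_⟩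
    rintro C ⟨⟨u, rfl⟩, ha⟩
    exact cls_eq_cls hsym htr (show e u a from ha)

/-- The singleton partition is forward stable. -/
lemma singleton_fsp (δ : Q → A → Set Q) : FwdStablePartition δ (eqCls (Eq : Q → Q → Prop)) := by
  constructor
  · exact isPartition_eqCls (fun x => rfl) (fun _ _ h => h.symm) (fun _ _ _ h h' => h.trans h')
  · rintro S ⟨u, rfl⟩ T ⟨w, rfl⟩ a
    by_cases h : u ∈ deltaSet δ a {v | w = v}
    · left; rintro x hx
      have : x = u := hx.symm
      rwa [this]
    · right
      ext x; simp only [Set.mem_inter_iff, Set.mem_empty_iff_false, iff_false, not_and]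
      rintro hx hx'
      have hx2 : u = x := hx
      rw [← hx2] at hx'
      exact h hx'

end Aux

/-- A bundled context: input-consistent Wheeler NFA with source having no
incoming transitions. -/
structure WCtx (Q A : Type*) [LT A] where
  δ : Q → A → Set Q
  s : Q
  lt : Q → Q → Prop
  hs : ∀ u a, s ∉ δ u a
  hic : ∀ v, v ≠ s → ∃! a, ∃ u, v ∈ δ u a
  irr : ∀ x, ¬ lt x x
  tr : ∀ x y z, lt x y → lt y z → lt x z
  tot : ∀ x y, x ≠ y → lt x y ∨ lt y x
  src : ∀ v, v ≠ s → lt s v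
  ax : ∀ u u' v v' (a a' : A), v ∈ δ u a → v' ∈ δ u' a' →
    (a < a' → lt v v') ∧ (a = a' → lt u u' → v ≠ v' → lt v v')

namespace WCtx

variable {Q A : Type*} [LinearOrder A] (K : WCtx Q A)

/-- Reflexive closure of the Wheeler order. -/
def wle (x y : Q) : Prop := K.lt x y ∨ x = y

variable {K}

lemma asym {x y : Q} (h : K.lt x y) : ¬ K.lt y x := fun h' => K.irr x (K.tr x y x h h')

lemma wle_refl (x : Q) : K.wle x x := Or.inr rfl

lemma wle_trans {x y z : Q} (h : K.wle x y) (h' : K.wle y z) : K.wle x z := by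
  rcases h with h | rfl
  · rcases h' with h' | rfl
    · exact Or.inl (K.tr _ _ _ h h')
    · exact Or.inl h
  · exact h'

lemma lt_of_lt_of_wle {x y z : Q} (h : K.lt x y) (h' : K.wle y z) : K.lt x z := by
  rcases h' with h' | rfl
  · exact K.tr _ _ _ h h'
  · exact h

lemma lt_of_wle_of_lt {x y z : Q} (h : K.wle x y) (h' : K.lt y z) : K.lt x z := by
  rcases h with h | rfl
  · exact K.tr _ _ _ h h'
  · exact h'

lemma wle_antisymm {x y : Q} (h : K.wle x y) (h' : K.wle y x) : x = y := by
  rcases h with h | rfl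
  · rcases h' with h' | rfl
    · exact absurd h' (asym h)
    · rfl
  · rfl

lemma wle_total (x y : Q) : K.wle x y ∨ K.wle y x := by
  by_cases h : x = y
  · exact Or.inl (Or.inr h)
  · rcases K.tot x y h with h' | h'
    · exact Or.inl (Or.inl h')
    · exact Or.inr (Or.inl h')

lemma not_wle {x y : Q} (h : ¬ K.wle x y) : K.lt y x := by
  rcases wle_total (K := K) y x with h' | h'
  · rcases h' with h' | rfl
    · exact h'
    · exact absurd (wle_refl _) h
  · exact absurd h' h

lemma eq_s_of_wle_s {x : Q} (h : K.wle x K.s) : x = K.s := by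
  rcases h with h | rfl
  · by_contra hx
    exact asym (K.src x hx) h
  · rfl

lemma ne_s_of_mem {v u : Q} {a : A} (h : v ∈ K.δ u a) : v ≠ K.s :=
  fun hv => K.hs u a (hv ▸ h)

/-- Input consistency: two incoming transitions of the same state carry
the same letter. -/
lemma letter_unique {v u u' : Q} {a a' : A} (h : v ∈ K.δ u a) (h' : v ∈ K.δ u' a') :
    a = a' := by
  obtain ⟨b, _, hb⟩ := K.hic v (ne_s_of_mem h)
  exact (hb a ⟨u, h⟩).trans (hb a' ⟨u', h'⟩).symm

lemma exists_parent {v : Q} (hv : v ≠ K.s) : ∃ a u, v ∈ K.δ u a := by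
  obtain ⟨b, ⟨u, hu⟩, _⟩ := K.hic v hv
  exact ⟨b, u, hu⟩

lemma ax1 {u u' v v' : Q} {a a' : A} (h : v ∈ K.δ u a) (h' : v' ∈ K.δ u' a')
    (hlt : a < a') : K.lt v v' :=
  ((K.ax u u' v v' a a' h h').1) hlt

lemma ax2 {u u' v v' : Q} {a : A} (h : v ∈ K.δ u a) (h' : v' ∈ K.δ u' a)
    (hu : K.lt u u') (hv : v ≠ v') : K.lt v v' :=
  ((K.ax u u' v v' a a h h').2) rfl hu hv

/-- Monotonicity of letters along the Wheeler order. -/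
lemma letter_mono {u u' v v' : Q} {a a' : A} (h : v ∈ K.δ u a) (h' : v' ∈ K.δ u' a')
    (hv : K.wle v v') : a ≤ a' := by
  by_contra hc
  have : K.lt v' v := ax1 h' h (lt_of_not_ge hc)
  rcases hv with hv | rfl
  · exact asym hv this
  · exact K.irr v this

/-- A state between two states with in-letter `a` also has in-letter `a`. -/
lemma letter_between {x y z ux uy uz : Q} {a c : A} (hx : x ∈ K.δ ux a)
    (hy : y ∈ K.δ uy a) (hz : z ∈ K.δ uz c) (h1 : K.wle x z) (h2 : K.wle z y) :
    c = a :=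
  le_antisymm (letter_mono hz hy h2) (letter_mono hx hz h1)

/-- Parent monotonicity. -/
lemma parent_mono {u u' v v' : Q} {a : A} (h : v ∈ K.δ u a) (h' : v' ∈ K.δ u' a)
    (hv : K.lt v v') : K.wle u u' := by
  by_contra hc
  exact asym hv (ax2 h' h (not_wle hc) (fun he => K.irr v (he ▸ hv)))

end WCtx
namespace WCtx

variable {Q A : Type*} [LinearOrder A] {K : WCtx Q A}

/-- Generator of the join of all forward-stable partitions: `u` and `v` lie in a
common part of some forward-stable partition. -/
def RJ (K : WCtx Q A) (u v : Q) : Prop :=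
  ∃ P, FwdStablePartition K.δ P ∧ ∃ S ∈ P, u ∈ S ∧ v ∈ S

/-- The coarsest forward-stable equivalence: transitive closure of `RJ`. -/
def Sim (K : WCtx Q A) : Q → Q → Prop := Relation.TransGen K.RJ

lemma rj_refl (u : Q) : K.RJ u u :=
  ⟨eqCls Eq, singleton_fsp K.δ, {v | u = v}, ⟨u, rfl⟩, rfl, rfl⟩

lemma rj_symm {u v : Q} (h : K.RJ u v) : K.RJ v u := by
  obtain ⟨P, hP, S, hS, hu, hv⟩ := h
  exact ⟨P, hP, S, hS, hv, hu⟩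

lemma sim_refl (u : Q) : K.Sim u u := Relation.TransGen.single (rj_refl u)

lemma sim_trans {u v w : Q} (h : K.Sim u v) (h' : K.Sim v w) : K.Sim u w :=
  Relation.TransGen.trans h h'

lemma sim_symm {u v : Q} (h : K.Sim u v) : K.Sim v u := by
  induction h with
  | single h => exact Relation.TransGen.single (rj_symm h)
  | tail h1 h2 ih => exact Relation.TransGen.head (rj_symm h2) ih

lemma sim_of_rj {u v : Q} (h : K.RJ u v) : K.Sim u v := Relation.TransGen.single h

/-- In a forward-stable partition, the part of the source is `{s}`. -/
lemma source_class {P : Set (Set Q)} (hP : FwdStablePartition K.δ P)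
    {S : Set Q} (hS : S ∈ P) (hsS : K.s ∈ S) : S = {K.s} := by
  ext v
  simp only [Set.mem_singleton_iff]
  constructor
  · intro hv
    by_contra hvs
    obtain ⟨a, u, h⟩ := exists_parent (K := K) hvs
    obtain ⟨T, ⟨hT, huT⟩, -⟩ := hP.1.2 u
    rcases hP.2 S hS T hT a with hsub | hdis
    · obtain ⟨u', -, h'⟩ := mem_deltaSet.1 (hsub hsS)
      exact K.hs u' a h'
    · have : v ∈ S ∩ deltaSet K.δ a T := ⟨hv, mem_deltaSet.2 ⟨u, huT, h⟩⟩
      rw [hdis] at this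
      exact this
  · rintro rfl; exact hsS

/-- Forward-stability, pointed version. -/
lemma fs_sub {P : Set (Set Q)} (hP : FwdStablePartition K.δ P)
    {S T : Set Q} (hS : S ∈ P) (hT : T ∈ P) {a : A} {x : Q} (hx : x ∈ S)
    (hx' : x ∈ deltaSet K.δ a T) : S ⊆ deltaSet K.δ a T := by
  rcases hP.2 S hS T hT a with h | h
  · exact h
  · exact absurd (h ▸ (⟨hx, hx'⟩ : x ∈ S ∩ deltaSet K.δ a T)) (Set.notMem_empty x)

lemma sim_source {v : Q} (h : K.Sim K.s v) : v = K.s := by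
  induction h with
  | single h =>
    obtain ⟨P, hP, S, hS, hsS, hvS⟩ := h
    have := source_class hP hS hsS ▸ hvS
    exact this
  | tail h1 h2 ih =>
    subst ih
    obtain ⟨P, hP, S, hS, hsS, hvS⟩ := h2
    have := source_class hP hS hsS ▸ hvS
    exact this

/-- One step of forward-stability propagation for the join. -/
lemma rj_fs_step {z z' w : Q} {a : A} (h : K.RJ z z')
    (hz : z ∈ deltaSet K.δ a {t | K.Sim w t}) :
    z' ∈ deltaSet K.δ a {t | K.Sim w t} := by
  obtain ⟨P, hP, S, hS, hzS, hz'S⟩ := h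
  obtain ⟨t, hwt, hzt⟩ := mem_deltaSet.1 hz
  obtain ⟨T, ⟨hT, htT⟩, -⟩ := hP.1.2 t
  have hsub : S ⊆ deltaSet K.δ a T :=
    fs_sub hP hS hT hzS (mem_deltaSet.2 ⟨t, htT, hzt⟩)
  obtain ⟨t', ht'T, h'⟩ := mem_deltaSet.1 (hsub hz'S)
  exact mem_deltaSet.2 ⟨t', sim_trans hwt (sim_of_rj ⟨P, hP, T, hT, htT, ht'T⟩), h'⟩

lemma sim_fs {x y w : Q} {a : A} (h : K.Sim x y)
    (hx : x ∈ deltaSet K.δ a {t | K.Sim w t}) :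
    y ∈ deltaSet K.δ a {t | K.Sim w t} := by
  induction h with
  | single h => exact rj_fs_step h hx
  | tail h1 h2 ih => exact rj_fs_step h2 ih

/-- The join partition is forward stable. -/
lemma sim_fsp : FwdStablePartition K.δ (eqCls K.Sim) := by
  constructor
  · exact isPartition_eqCls sim_refl (fun _ _ => sim_symm) (fun _ _ _ => sim_trans)
  · rintro S ⟨u, rfl⟩ T ⟨w, rfl⟩ a
    by_cases h : ∃ x, x ∈ {v | K.Sim u v} ∧ x ∈ deltaSet K.δ a {v | K.Sim w v}
    · left
      obtain ⟨x, hxu, hx⟩ := h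
      intro y hyu
      exact sim_fs (sim_trans (sim_symm hxu) hyu) hx
    · right
      ext x
      simp only [Set.mem_inter_iff, Set.mem_empty_iff_false, iff_false, not_and]
      intro h1 h2
      exact h ⟨x, h1, h2⟩

/-- The join partition is coarsest: every forward-stable partition refines it. -/
lemma refines_sim {P : Set (Set Q)} (hP : FwdStablePartition K.δ P) :
    Refines P (eqCls K.Sim) := by
  intro C hC
  have hne : C.Nonempty := by
    rcases C.eq_empty_or_nonempty with rfl | h
    · exact absurd hC hP.1.1
    · exact h
  obtain ⟨u, hu⟩ := hne
  refine ⟨{v | K.Sim u v}, ⟨u, rfl⟩, ?_⟩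
  intro v hv
  exact sim_of_rj ⟨P, hP, C, hC, hu, hv⟩

end WCtx
namespace WCtx

variable {Q A : Type*} [LinearOrder A] {K : WCtx Q A}

/-- Generator of the hull closure: `u` and `v` both lie in the convex hull of
some `Sim`-class. -/
def RH (K : WCtx Q A) (u v : Q) : Prop :=
  ∃ x y, K.Sim x y ∧ K.wle x u ∧ K.wle u y ∧ K.wle x v ∧ K.wle v y

def SimH (K : WCtx Q A) : Q → Q → Prop := Relation.TransGen K.RH

lemma rh_symm {u v : Q} (h : K.RH u v) : K.RH v u := by
  obtain ⟨x, y, h1, h2, h3, h4, h5⟩ := h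
  exact ⟨x, y, h1, h4, h5, h2, h3⟩

lemma rh_of_sim {u v : Q} (h : K.Sim u v) : K.RH u v := by
  rcases wle_total (K := K) u v with hle | hle
  · exact ⟨u, v, h, wle_refl u, hle, hle, wle_refl v⟩
  · exact ⟨v, u, sim_symm h, hle, wle_refl u, wle_refl v, hle⟩

lemma simH_of_sim {u v : Q} (h : K.Sim u v) : K.SimH u v :=
  Relation.TransGen.single (rh_of_sim h)

lemma simH_refl (u : Q) : K.SimH u u := simH_of_sim (sim_refl u)

lemma simH_symm {u v : Q} (h : K.SimH u v) : K.SimH v u := by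
  induction h with
  | single h => exact Relation.TransGen.single (rh_symm h)
  | tail h1 h2 ih => exact Relation.TransGen.head (rh_symm h2) ih

lemma simH_trans {u v w : Q} (h : K.SimH u v) (h' : K.SimH v w) : K.SimH u w :=
  Relation.TransGen.trans h h'

lemma rh_source {v : Q} (h : K.RH K.s v) : v = K.s := by
  obtain ⟨x, y, hxy, hx, hy, hxv, hvy⟩ := h
  have hx' : x = K.s := eq_s_of_wle_s hx
  have hy' : y = K.s := sim_source (hx' ▸ hxy)
  exact eq_s_of_wle_s (hy' ▸ hvy)

lemma simH_source {v : Q} (h : K.SimH K.s v) : v = K.s := by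
  induction h with
  | single h => exact rh_source h
  | tail h1 h2 ih => exact rh_source (ih ▸ h2)

/-- Interval property of hull-closure classes. -/
lemma simH_between' {u v : Q} (h : K.SimH u v) :
    ∀ w, (K.wle u w ∧ K.wle w v) ∨ (K.wle v w ∧ K.wle w u) → K.SimH u w := by
  induction h with
  | @single b h =>
    intro w hw
    obtain ⟨x, y, hxy, hxu, huy, hxv, hvy⟩ := h
    rcases hw with ⟨h1, h2⟩ | ⟨h1, h2⟩
    · exact Relation.TransGen.single
        ⟨x, y, hxy, hxu, huy, wle_trans hxu h1, wle_trans h2 hvy⟩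
    · exact Relation.TransGen.single
        ⟨x, y, hxy, hxu, huy, wle_trans hxv h1, wle_trans h2 huy⟩
  | @tail b c h1 h2 ih =>
    intro w hw
    obtain ⟨x, y, hxy, hxb, hby, hxc, hcy⟩ := h2
    rcases hw with ⟨h3, h4⟩ | ⟨h3, h4⟩
    · rcases wle_total (K := K) w b with h5 | h5
      · exact ih w (Or.inl ⟨h3, h5⟩)
      · exact Relation.TransGen.tail h1
          ⟨x, y, hxy, hxb, hby, wle_trans hxb h5, wle_trans h4 hcy⟩
    · rcases wle_total (K := K) b w with h5 | h5
      · exact ih w (Or.inr ⟨h5, h4⟩)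
      · exact Relation.TransGen.tail h1
          ⟨x, y, hxy, hxb, hby, wle_trans hxc h3, wle_trans h5 hby⟩

lemma simH_between {u v w : Q} (h : K.SimH u v) (h1 : K.wle u w) (h2 : K.wle w v) :
    K.SimH u w :=
  simH_between' h w (Or.inl ⟨h1, h2⟩)

/-- Letters are constant on `Sim`-classes. -/
lemma sim_letter {u v p q : Q} {a c : A} (h : K.Sim u v) (hu : u ∈ K.δ p a)
    (hv : v ∈ K.δ q c) : a = c := by
  have h1 : u ∈ deltaSet K.δ a {t | K.Sim p t} := mem_deltaSet.2 ⟨p, sim_refl p, hu⟩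
  obtain ⟨q', -, hv'⟩ := mem_deltaSet.1 (sim_fs h h1)
  exact letter_unique hv' hv

/-- Letters are constant on one-step hull-closure neighbours. -/
lemma rh_letter {b c p q : Q} {β γ : A} (h : K.RH b c) (hb : b ∈ K.δ p β)
    (hc : c ∈ K.δ q γ) : β = γ := by
  obtain ⟨x, y, hxy, hxb, hby, hxc, hcy⟩ := h
  have hxs : x ≠ K.s := by
    rintro rfl
    have hy : y = K.s := sim_source hxy
    exact ne_s_of_mem (K := K) hb (eq_s_of_wle_s (hy ▸ hby))
  obtain ⟨bx, px, hx⟩ := exists_parent (K := K) hxs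
  have h1 : x ∈ deltaSet K.δ bx {t | K.Sim px t} := mem_deltaSet.2 ⟨px, sim_refl px, hx⟩
  obtain ⟨py, -, hy⟩ := mem_deltaSet.1 (sim_fs hxy h1)
  have hβ : β = bx := letter_between hx hy hb hxb hby
  have hγ : γ = bx := letter_between hx hy hc hxc hcy
  rw [hβ, hγ]

lemma simH_letter {u v p : Q} {a : A} (h : K.SimH u v) (hu : u ∈ K.δ p a) :
    ∀ {q : Q} {c : A}, v ∈ K.δ q c → a = c := by
  induction h with
  | @single b h => exact fun hv => rh_letter h hu hv
  | @tail b c h1 h2 ih =>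
    intro q c' hv
    have hbs : b ≠ K.s := by
      rintro rfl
      exact ne_s_of_mem (K := K) hu (simH_source (simH_symm h1))
    obtain ⟨β, pb, hb⟩ := exists_parent (K := K) hbs
    exact (ih hb).trans (rh_letter h2 hb hv)

/-- ★ outward: from a good class element to any element of its hull. -/
lemma star_out {g1 g2 z d1 w0 : Q} {a : A} (hg : K.Sim g1 g2)
    (hg1 : g1 ∈ K.δ d1 a) (hd1 : K.SimH w0 d1)
    (h1 : K.wle g1 z) (h2 : K.wle z g2) :
    z ∈ deltaSet K.δ a {t | K.SimH w0 t} := by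
  -- a parent of `g2` in the class of `d1`
  have hgd : g1 ∈ deltaSet K.δ a {t | K.Sim d1 t} := mem_deltaSet.2 ⟨d1, sim_refl d1, hg1⟩
  obtain ⟨d2, hd12, hg2⟩ := mem_deltaSet.1 (sim_fs hg hgd)
  rcases h1 with h1 | rfl
  swap
  · exact mem_deltaSet.2 ⟨d1, hd1, hg1⟩
  rcases h2 with h2 | rfl
  swap
  · exact mem_deltaSet.2 ⟨d2, simH_trans hd1 (simH_of_sim hd12), hg2⟩
  -- now `g1 ≺ z ≺ g2`
  have hzs : z ≠ K.s := by
    rintro rfl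
    exact asym (K.src g1 (ne_s_of_mem (K := K) hg1)) h1
  obtain ⟨c, wz, hz⟩ := exists_parent (K := K) hzs
  have hca : c = a := letter_between hg1 hg2 hz (Or.inl h1) (Or.inl h2)
  subst hca
  have hb1 : K.wle d1 wz := parent_mono hg1 hz h1
  have hb2 : K.wle wz d2 := parent_mono hz hg2 h2
  have : K.RH d1 wz :=
    ⟨d1, d2, hd12, wle_refl d1, wle_trans hb1 hb2, hb1, hb2⟩
  exact mem_deltaSet.2 ⟨wz, simH_trans hd1 (Relation.TransGen.single this), hz⟩

/-- ★ inward: from a good hull element to the class itself. -/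
lemma star_in {g1 g2 z t w0 : Q} {a : A} (hg : K.Sim g1 g2)
    (h1 : K.wle g1 z) (h2 : K.wle z g2)
    (hz : z ∈ K.δ t a) (ht : K.SimH w0 t) :
    g1 ∈ deltaSet K.δ a {t' | K.SimH w0 t'} := by
  rcases h1 with h1 | rfl
  swap
  · exact mem_deltaSet.2 ⟨t, ht, hz⟩
  rcases h2 with h2 | rfl
  swap
  · -- z = g2 : propagate inside the Sim-class
    have hzd : z ∈ deltaSet K.δ a {t' | K.Sim t t'} := mem_deltaSet.2 ⟨t, sim_refl t, hz⟩
    obtain ⟨t', htt', hg1'⟩ := mem_deltaSet.1 (sim_fs (sim_symm hg) hzd)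
    exact mem_deltaSet.2 ⟨t', simH_trans ht (simH_of_sim htt'), hg1'⟩
  -- now `g1 ≺ z ≺ g2`
  have hg1s : g1 ≠ K.s := by
    rintro rfl
    have : g2 = K.s := sim_source hg
    exact ne_s_of_mem (K := K) hz (eq_s_of_wle_s (Or.inl (this ▸ h2)))
  obtain ⟨c, p1, hp1⟩ := exists_parent (K := K) hg1s
  have hgd : g1 ∈ deltaSet K.δ c {t' | K.Sim p1 t'} := mem_deltaSet.2 ⟨p1, sim_refl p1, hp1⟩
  obtain ⟨p2, hp12, hp2⟩ := mem_deltaSet.1 (sim_fs hg hgd)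
  have hac : a = c := letter_between hp1 hp2 hz (Or.inl h1) (Or.inl h2)
  subst hac
  have hb1 : K.wle p1 t := parent_mono hp1 hz h1
  have hb2 : K.wle t p2 := parent_mono hz hp2 h2
  have hrh : K.RH p1 t :=
    ⟨p1, p2, hp12, wle_refl p1, wle_trans hb1 hb2, hb1, hb2⟩
  have : K.SimH w0 p1 := simH_trans ht (simH_symm (Relation.TransGen.single hrh))
  exact mem_deltaSet.2 ⟨p1, this, hp1⟩

/-- One step of forward-stability propagation for the hull closure. -/
lemma rh_fs_step {z z' w0 : Q} {a : A} (h : K.RH z z')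
    (hz : z ∈ deltaSet K.δ a {t | K.SimH w0 t}) :
    z' ∈ deltaSet K.δ a {t | K.SimH w0 t} := by
  obtain ⟨p, q, hpq, hpz, hzq, hpz', hz'q⟩ := h
  obtain ⟨t, ht, hzt⟩ := mem_deltaSet.1 hz
  have hp : p ∈ deltaSet K.δ a {t' | K.SimH w0 t'} := star_in hpq hpz hzq hzt ht
  obtain ⟨t1, ht1, hpt1⟩ := mem_deltaSet.1 hp
  exact star_out hpq hpt1 ht1 hpz' hz'q

lemma simH_fs {x y w0 : Q} {a : A} (h : K.SimH x y)
    (hx : x ∈ deltaSet K.δ a {t | K.SimH w0 t}) :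
    y ∈ deltaSet K.δ a {t | K.SimH w0 t} := by
  induction h with
  | single h => exact rh_fs_step h hx
  | tail h1 h2 ih => exact rh_fs_step h2 ih

/-- The hull-closure partition is forward stable. -/
lemma simH_fsp : FwdStablePartition K.δ (eqCls K.SimH) := by
  constructor
  · exact isPartition_eqCls simH_refl (fun _ _ => simH_symm) (fun _ _ _ => simH_trans)
  · rintro S ⟨u, rfl⟩ T ⟨w, rfl⟩ a
    by_cases h : ∃ x, x ∈ {v | K.SimH u v} ∧ x ∈ deltaSet K.δ a {v | K.SimH w v}
    · left
      obtain ⟨x, hxu, hx⟩ := h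
      intro y hyu
      exact simH_fs (simH_trans (simH_symm hxu) hyu) hx
    · right
      ext x
      simp only [Set.mem_inter_iff, Set.mem_empty_iff_false, iff_false, not_and]
      intro h1 h2
      exact h ⟨x, h1, h2⟩

/-- Hence the hull closure agrees with `Sim`: `Sim`-classes are intervals. -/
lemma sim_of_simH {u v : Q} (h : K.SimH u v) : K.Sim u v := by
  obtain ⟨D, ⟨w, rfl⟩, hsub⟩ :=
    refines_sim (simH_fsp (K := K)) {t | K.SimH u t} ⟨u, rfl⟩
  exact sim_trans (sim_symm (hsub (simH_refl u))) (hsub h)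

/-- Interval property of `Sim`-classes. -/
lemma sim_between {u v w : Q} (h : K.Sim u v) (h1 : K.wle u w) (h2 : K.wle w v) :
    K.Sim u w :=
  sim_of_simH (simH_between (simH_of_sim h) h1 h2)

/-- Separation of distinct `Sim`-classes. -/
lemma sim_sep {u v u' v' : Q} (hns : ¬ K.Sim u v) (hlt : K.lt u v)
    (hu : K.Sim u u') (hv : K.Sim v v') : K.lt u' v' := by
  have hne : u' ≠ v' := by
    rintro rfl
    exact hns (sim_trans hu (sim_symm hv))
  rcases K.tot u' v' hne with h | h
  · exact h
  · -- derive a contradiction from v' < u'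
    exfalso
    rcases wle_total (K := K) v' u with h1 | h1
    · exact hns (sim_symm (sim_trans hv (sim_between (sim_symm hv) h1 (Or.inl hlt))))
    · have h2 : K.wle v' u' := Or.inl h
      exact hns (sim_trans (sim_between hu h1 h2) (sim_symm hv))

end WCtx
open WCtx in
/-- Every input-consistent Wheeler NFA (with source without in-going transitions
and all states reachable from the source) is quasi-Wheeler: it admits a Wheeler
preorder. -/
theorem stmt6 {Q A : Type*} [Fintype Q] [Fintype A] [LinearOrder A]
    (δ : Q → A → Set Q) (s : Q)
    (hs : ∀ u a, s ∉ δ u a)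
    (hreach : ∀ v : Q, ∃ α, v ∈ deltaStr δ s α)
    (hic : ∀ v : Q, v ≠ s → ∃! a : A, ∃ u, v ∈ δ u a)
    (hW : ∃ lt : Q → Q → Prop, IsWheelerOrder δ s lt) :
    ∃ le : Q → Q → Prop, IsWheelerPreorder δ s le := by
  obtain ⟨lt, hirr, htr, htot, hsrc, hax⟩ := hW
  let K : WCtx Q A := ⟨δ, s, lt, hs, hic, hirr, htr, htot, hsrc, hax⟩
  refine ⟨fun u v => K.Sim u v ∨ K.lt u v, ?_, ?_, ?_, ⟨?_, ?_⟩, ?_⟩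
  · exact fun x => Or.inl (sim_refl x)
  · -- transitivity
    rintro x y z (h | h) (h' | h')
    · exact Or.inl (sim_trans h h')
    · by_cases hxz : K.Sim x z
      · exact Or.inl hxz
      · refine Or.inr ?_
        have hne : x ≠ z := fun he => hxz (he ▸ sim_refl x)
        rcases K.tot x z hne with h2 | h2
        · exact h2
        · exact absurd (sim_trans h (sim_between (sim_symm h) (Or.inl h') (Or.inl h2))) hxz
    · by_cases hxz : K.Sim x z
      · exact Or.inl hxz
      · refine Or.inr ?_
        have hne : x ≠ z := fun he => hxz (he ▸ sim_refl x)
        rcases K.tot x z hne with h2 | h2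
        · exact h2
        · exact absurd (sim_symm (sim_between (sim_symm h') (Or.inl h2) (Or.inl h))) hxz
    · exact Or.inr (K.tr x y z h h')
  · -- totality
    intro x y
    by_cases hxy : x = y
    · exact Or.inl (Or.inl (hxy ▸ sim_refl x))
    · rcases K.tot x y hxy with h | h
      · exact Or.inl (Or.inr h)
      · exact Or.inr (Or.inr h)
  all_goals
    have hcls : ∀ u : Q, {v | (K.Sim u v ∨ K.lt u v) ∧ (K.Sim v u ∨ K.lt v u)}
        = {v | K.Sim u v} := by
      intro u
      ext v
      constructor
      · rintro ⟨h1 | h1, h2 | h2⟩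
        · exact h1
        · exact h1
        · exact sim_symm h2
        · exact absurd h2 (asym h1)
      · exact fun h => ⟨Or.inl h, Or.inl (sim_symm h)⟩
    have hsimcls : simClasses (fun u v => K.Sim u v ∨ K.lt u v) = eqCls K.Sim := by
      ext C
      constructor
      · rintro ⟨u, rfl⟩
        exact ⟨u, hcls u⟩
      · rintro ⟨u, rfl⟩
        exact ⟨u, (hcls u).symm⟩
  · -- forward-stable partition
    rw [hsimcls]
    exact sim_fsp (K := K)
  · -- coarsest
    intro P hP
    rw [hsimcls]
    exact refines_sim (K := K) hP
  · -- quotient automaton is Wheeler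
    have hrep : ∀ C : {C : Set Q // C ∈ simClasses (fun u v => K.Sim u v ∨ K.lt u v)},
        ∃ u, u ∈ C.1 ∧ C.1 = {v | K.Sim u v} := by
      rintro ⟨C, hC⟩
      rw [hsimcls] at hC
      obtain ⟨u, rfl⟩ := hC
      exact ⟨u, sim_refl u, rfl⟩
    have hmem2 : ∀ C : {C : Set Q // C ∈ simClasses (fun u v => K.Sim u v ∨ K.lt u v)},
        ∀ {x y : Q}, x ∈ C.1 → y ∈ C.1 → K.Sim x y := by
      intro C x y hx hy
      obtain ⟨u, -, hCu⟩ := hrep C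
      rw [hCu] at hx hy
      exact sim_trans (sim_symm hx) hy
    have hceq : ∀ C D : {C : Set Q // C ∈ simClasses (fun u v => K.Sim u v ∨ K.lt u v)},
        ∀ {x y : Q}, x ∈ C.1 → y ∈ D.1 → K.Sim x y → C = D := by
      intro C D x y hx hy hxy
      obtain ⟨u, -, hCu⟩ := hrep C
      obtain ⟨w, -, hDw⟩ := hrep D
      rw [hCu] at hx
      rw [hDw] at hy
      have hx' : K.Sim u x := hx
      have hy' : K.Sim w y := hy
      have huy : K.Sim u y := sim_trans hx' hxy
      have huw : K.Sim u w := sim_trans huy (sim_symm hy')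
      apply Subtype.ext
      rw [hCu, hDw]
      exact cls_eq_cls (e := K.Sim) (fun _ _ h => sim_symm h) (fun _ _ _ h h' => sim_trans h h') huw
    have hstr : ∀ {u v : Q},
        ((K.Sim u v ∨ K.lt u v) ∧ ¬ (K.Sim v u ∨ K.lt v u)) ↔ (K.lt u v ∧ ¬ K.Sim u v) := by
      intro u v
      constructor
      · rintro ⟨h1 | h1, h2⟩
        · exact absurd (Or.inl (sim_symm h1)) h2
        · exact ⟨h1, fun hc => h2 (Or.inl (sim_symm hc))⟩
      · rintro ⟨h1, h2⟩
        refine ⟨Or.inr h1, ?_⟩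
        rintro (h3 | h3)
        · exact h2 (sim_symm h3)
        · exact asym h1 h3
    refine ⟨?_, ?_, ?_, ?_, ?_⟩
    · -- irreflexivity
      rintro C ⟨u, hu, v, hv, hlv⟩
      obtain ⟨h1, h2⟩ := hstr.1 hlv
      exact h2 (hmem2 C hu hv)
    · -- transitivity
      rintro C D E ⟨u1, hu1, v1, hv1, hx⟩ ⟨u2, hu2, v2, hv2, hy⟩
      obtain ⟨hx1, hx2⟩ := hstr.1 hx
      obtain ⟨hy1, hy2⟩ := hstr.1 hy
      have h12 : K.lt u1 u2 := sim_sep hx2 hx1 (sim_refl u1) (hmem2 D hv1 hu2)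
      refine ⟨u1, hu1, v2, hv2, hstr.2 ⟨K.tr _ _ _ h12 hy1, ?_⟩⟩
      intro hc
      exact asym hx1 (sim_sep hy2 hy1 (hmem2 D hu2 hv1) (sim_symm hc))
    · -- totality
      rintro C D hne
      obtain ⟨u, huC, -⟩ := hrep C
      obtain ⟨w, hwD, -⟩ := hrep D
      have hns : ¬ K.Sim u w := fun h => hne (hceq C D huC hwD h)
      have hnuw : u ≠ w := fun he => hns (he ▸ sim_refl u)
      rcases K.tot u w hnuw with h | h
      · exact Or.inl ⟨u, huC, w, hwD, hstr.2 ⟨h, hns⟩⟩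
      · exact Or.inr ⟨w, hwD, u, huC, hstr.2 ⟨h, fun hc => hns (sim_symm hc)⟩⟩
    · -- source is minimal
      rintro D hne
      have hsmem : s ∈ {v | ((K.Sim s v ∨ K.lt s v) ∧ (K.Sim v s ∨ K.lt v s))} :=
        ⟨Or.inl (sim_refl s), Or.inl (sim_refl s)⟩
      obtain ⟨u, huD, -⟩ := hrep D
      have hus : u ≠ s := by
        rintro rfl
        exact hne (hceq D _ huD hsmem (sim_refl u))
      refine ⟨s, hsmem, u, huD, hstr.2 ⟨K.src u hus, ?_⟩⟩
      intro hc
      exact hus (sim_source (K := K) hc)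
    · -- the two Wheeler axioms
      rintro C C' D D' a a' hD hD'
      obtain ⟨u, huC, v, hvD, hvt⟩ := hD
      obtain ⟨u', hu'C', v', hv'D', hv't⟩ := hD'
      constructor
      · intro haa
        refine ⟨v, hvD, v', hv'D', hstr.2 ⟨ax1 (K := K) hvt hv't haa, ?_⟩⟩
        intro hc
        exact absurd (sim_letter hc hvt hv't) (ne_of_lt haa)
      · rintro rfl hCC' hDD'
        obtain ⟨c, hcC, c', hc'C', hcc⟩ := hCC'
        obtain ⟨hc1, hc2⟩ := hstr.1 hcc
        have huu' : K.lt u u' := sim_sep hc2 hc1 (hmem2 C hcC huC) (hmem2 C' hc'C' hu'C')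
        have hne : v ≠ v' := fun he => hDD' (hceq D D' hvD hv'D' (he ▸ sim_refl v))
        refine ⟨v, hvD, v', hv'D', hstr.2 ⟨ax2 (K := K) hvt hv't huu' hne, ?_⟩⟩
        intro hc
        exact hDD' (hceq D D' hvD hv'D' hc)
end

section
/- Let Σ be a finite non-empty totally ordered alphabet. The co-lexicographic order on Σ^• = Σ* ∪ Σ^ω is a total order, and every non-empty set S ⊆ Σ* of finite strings has a greatest lower bound inf S and a least upper bound sup S in (Σ^•, ≤). -/
/-- A finite or left-infinite string over the alphabet `A` (an element of
`Σ^• = Σ* ∪ Σ^ω`), represented by the function `f` sending a position `i`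
(counted from the right end, starting at `0`) to the character at that
position, or to `none` beyond the left end of a finite string. The field
`init` says the support of `f` is an initial segment of `ℕ`. -/
structure ColexStr (A : Type*) where
  f : ℕ → Option A
  init : ∀ i, f i = none → f (i + 1) = none

/-- The finite string `c₁⋯cₙ` given by the list `[c₁, …, cₙ]`, as a `ColexStr`. -/
def ofList {A : Type*} (l : List A) : ColexStr A where
  f i := if h : i < l.length then some (l[l.length - 1 - i]'(by omega)) else none
  init i hi := by
    try dsimp only at hi ⊢
    by_cases h : i + 1 < l.length
    · exfalso
      have h' : i < l.length := by omega
      rw [dif_pos h'] at hi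
      exact (Option.some_ne_none _) hi
    · rw [dif_neg h]

/-- `α` is a proper suffix of `β`: the characters of `α` agree with those of `β`
(at the same positions from the right end), and `β` extends strictly further to
the left. -/
def IsProperSuffix {A : Type*} (α β : ColexStr A) : Prop :=
  (∀ i, α.f i ≠ none → β.f i = α.f i) ∧ ∃ i, α.f i = none ∧ β.f i ≠ none

/-- The co-lexicographic order on `Σ^•`: `α < β` iff either `α` is a proper
suffix of `β`, or `α = α'aγ` and `β = β'bγ` for some finite common suffix `γ`
(of length `n`), letters `a < b`, and (possibly empty) strings `α'`, `β'`. -/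
def ColexLt {A : Type*} [LT A] (α β : ColexStr A) : Prop :=
  IsProperSuffix α β ∨
    ∃ (n : ℕ) (a b : A), a < b ∧ α.f n = some a ∧ β.f n = some b ∧
      ∀ i < n, α.f i = β.f i

/-- The reflexive closure `≤` of the co-lexicographic order on `Σ^•`. -/
def ColexLe {A : Type*} [LT A] (α β : ColexStr A) : Prop :=
  ColexLt α β ∨ α = β

/-- `γ` is the greatest lower bound (infimum) in `(Σ^•, ≤)` of the set `S` of
finite strings. -/
def IsColexGLB {A : Type*} [LT A] (S : Set (List A)) (γ : ColexStr A) : Prop :=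
  (∀ l ∈ S, ColexLe γ (ofList l)) ∧
    ∀ γ' : ColexStr A, (∀ l ∈ S, ColexLe γ' (ofList l)) → ColexLe γ' γ

/-- `γ` is the least upper bound (supremum) in `(Σ^•, ≤)` of the set `S` of
finite strings. -/
def IsColexLUB {A : Type*} [LT A] (S : Set (List A)) (γ : ColexStr A) : Prop :=
  (∀ l ∈ S, ColexLe (ofList l) γ) ∧
    ∀ γ' : ColexStr A, (∀ l ∈ S, ColexLe (ofList l) γ') → ColexLe γ γ'

section Aux
variable {A : Type*}

def toW (o : Option A) : WithBot A := o.elim ⊥ (fun a => (a : WithBot A))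

@[simp] lemma toW_none : toW (none : Option A) = ⊥ := rfl
@[simp] lemma toW_some (a : A) : toW (some a) = (a : WithBot A) := rfl

lemma toW_inj : Function.Injective (toW (A := A)) := by
  rintro (_|a) (_|b) h
  · rfl
  · exact absurd h.symm (WithBot.coe_ne_bot)
  · exact absurd h (WithBot.coe_ne_bot)
  · exact congrArg some (WithBot.coe_injective h)

lemma toW_eq_bot {o : Option A} : toW o = (⊥ : WithBot A) ↔ o = none := by
  cases o <;> simp

def fromW (w : WithBot A) : Option A := WithBot.recBotCoe none some w

@[simp] lemma toW_fromW (w : WithBot A) : toW (fromW w) = w := by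
  induction w using WithBot.recBotCoe <;> simp [fromW]

def wfn (α : ColexStr A) : ℕ → WithBot A := fun i => toW (α.f i)

lemma ColexStr.ext' {α β : ColexStr A} (h : α.f = β.f) : α = β := by
  cases α; cases β; simpa using h

lemma wfn_inj {α β : ColexStr A} (h : wfn α = wfn β) : α = β := by
  refine ColexStr.ext' (funext fun i => toW_inj ?_)
  exact congrFun h i

lemma init_chain (α : ColexStr A) {n m : ℕ} (h : α.f n = none) (hnm : n ≤ m) :
    α.f m = none := by
  induction m, hnm using Nat.le_induction with
  | base => exact h
  | succ m hm ih => exact α.init m ih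

variable [LinearOrder A]

def MyLt (α β : ColexStr A) : Prop :=
  ∃ n, (∀ j < n, wfn α j = wfn β j) ∧ wfn α n < wfn β n

lemma colexLt_iff (α β : ColexStr A) : ColexLt α β ↔ MyLt α β := by
  constructor
  · rintro (⟨hagree, i0, hα, hβ⟩ | ⟨n, a, b, hab, hα, hβ, hagree⟩)
    · have hex : ∃ n, α.f n = none := ⟨i0, hα⟩
      set n := Nat.find hex with hn
      have hαn : α.f n = none := Nat.find_spec hex
      have hni0 : n ≤ i0 := Nat.find_le hα
      refine ⟨n, fun j hj => ?_, ?_⟩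
      · have hj' : α.f j ≠ none := Nat.find_min hex hj
        simp [wfn, hagree j hj']
      · have hβn : β.f n ≠ none := fun h => hβ (init_chain β h hni0)
        obtain ⟨b, hb⟩ := Option.ne_none_iff_exists'.mp hβn
        simp only [wfn, hαn, hb, toW_none, toW_some]
        exact WithBot.bot_lt_coe b
    · exact ⟨n, fun j hj => by simp [wfn, hagree j hj],
        by simp only [wfn, hα, hβ, toW_some]; exact_mod_cast hab⟩
  · rintro ⟨n, hagree, hlt⟩
    cases hα : α.f n with
    | none =>
      left
      refine ⟨fun i hi => ?_, n, hα, fun h => ?_⟩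
      · by_cases hin : i < n
        · exact (toW_inj (hagree i hin)).symm
        · exact absurd (init_chain α hα (le_of_not_gt hin)) hi
      · rw [wfn, wfn, hα, h] at hlt; exact lt_irrefl _ hlt
    | some a =>
      right
      rw [wfn, wfn, hα] at hlt
      cases hβ : β.f n with
      | none => rw [hβ] at hlt; exact absurd hlt (by simp)
      | some b =>
        rw [hβ] at hlt
        refine ⟨n, a, b, ?_, hα, hβ, fun i hi => toW_inj (hagree i hi)⟩
        simpa using hlt
    
lemma myLt_irrefl (α : ColexStr A) : ¬ MyLt α α := by
  rintro ⟨n, _, h⟩; exact lt_irrefl _ h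

lemma myLt_trans {α β γ : ColexStr A} : MyLt α β → MyLt β γ → MyLt α γ := by
  rintro ⟨n, h1, h2⟩ ⟨m, k1, k2⟩
  rcases lt_trichotomy n m with h | h | h
  · exact ⟨n, fun j hj => (h1 j hj).trans (k1 j (hj.trans h)), h2.trans_eq (k1 n h)⟩
  · subst h; exact ⟨n, fun j hj => (h1 j hj).trans (k1 j hj), h2.trans k2⟩
  · exact ⟨m, fun j hj => (h1 j (hj.trans h)).trans (k1 j hj), (h1 m h).trans_lt k2⟩

lemma myLt_total {α β : ColexStr A} (h : α ≠ β) : MyLt α β ∨ MyLt β α := by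
  have hne : ∃ n, wfn α n ≠ wfn β n := by
    by_contra hc
    push_neg at hc
    exact h (wfn_inj (funext hc))
  set n := Nat.find hne with hn
  have hsp : wfn α n ≠ wfn β n := Nat.find_spec hne
  have hag : ∀ j < n, wfn α j = wfn β j := fun j hj => by
    have := Nat.find_min hne hj; push_neg at this; exact this
  rcases lt_or_gt_of_ne hsp with hlt | hgt
  · exact Or.inl ⟨n, hag, hlt⟩
  · exact Or.inr ⟨n, fun j hj => (hag j hj).symm, hgt⟩

end Aux

section Sel
variable {A : Type*} [Fintype A] [LinearOrder A]

noncomputable instance withBotFintype : Fintype (WithBot A) :=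
  inferInstanceAs (Fintype (Option A))

noncomputable def pickMax (V : Set (WithBot A)) : WithBot A :=
  haveI := Classical.propDecidable V.Nonempty
  if h : V.Nonempty then (V.toFinite.toFinset).max' (by simpa using h) else ⊥

noncomputable def pickMin (V : Set (WithBot A)) : WithBot A :=
  haveI := Classical.propDecidable V.Nonempty
  if h : V.Nonempty then (V.toFinite.toFinset).min' (by simpa using h) else ⊥

lemma pickMax_mem {V : Set (WithBot A)} (h : V.Nonempty) : pickMax V ∈ V := by
  haveI := Classical.propDecidable V.Nonempty
  rw [pickMax, dif_pos h]
  have := (V.toFinite.toFinset).max'_mem (by simpa using h)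
  simpa using this

lemma le_pickMax {V : Set (WithBot A)} {v : WithBot A} (hv : v ∈ V) : v ≤ pickMax V := by
  haveI := Classical.propDecidable V.Nonempty
  rw [pickMax, dif_pos ⟨v, hv⟩]
  exact (V.toFinite.toFinset).le_max' v (by simpa using hv)

lemma pickMin_mem {V : Set (WithBot A)} (h : V.Nonempty) : pickMin V ∈ V := by
  haveI := Classical.propDecidable V.Nonempty
  rw [pickMin, dif_pos h]
  have := (V.toFinite.toFinset).min'_mem (by simpa using h)
  simpa using this

lemma pickMin_le {V : Set (WithBot A)} {v : WithBot A} (hv : v ∈ V) : pickMin V ≤ v := by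
  haveI := Classical.propDecidable V.Nonempty
  rw [pickMin, dif_pos ⟨v, hv⟩]
  exact (V.toFinite.toFinset).min'_le v (by simpa using hv)

noncomputable def selFun (sel : Set (WithBot A) → WithBot A) (T : Set (ColexStr A))
    (i : ℕ) : WithBot A :=
  sel {v | ∃ x ∈ T, (∀ j, ∀ _ : j < i, toW (x.f j) = selFun sel T j) ∧ toW (x.f i) = v}
termination_by i
decreasing_by assumption

def Agrees (g : ℕ → WithBot A) (x : ColexStr A) (i : ℕ) : Prop :=
  ∀ j, j < i → toW (x.f j) = g j

def VSet (sel : Set (WithBot A) → WithBot A) (T : Set (ColexStr A)) (i : ℕ) :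
    Set (WithBot A) :=
  {v | ∃ x ∈ T, Agrees (selFun sel T) x i ∧ toW (x.f i) = v}

lemma selFun_eq (sel : Set (WithBot A) → WithBot A) (T : Set (ColexStr A)) (i : ℕ) :
    selFun sel T i = sel (VSet sel T i) := by
  rw [selFun]; rfl

variable {sel : Set (WithBot A) → WithBot A} {T : Set (ColexStr A)}

lemma survivors (hsel : ∀ V : Set (WithBot A), V.Nonempty → sel V ∈ V) (hT : T.Nonempty) : ∀ i, ∃ x ∈ T, Agrees (selFun sel T) x i ∧ toW (x.f i) = selFun sel T i := by
  have key : ∀ i, ∃ x ∈ T, Agrees (selFun sel T) x i := by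
    intro i
    induction i with
    | zero => obtain ⟨x, hx⟩ := hT; exact ⟨x, hx, fun j hj => absurd hj (Nat.not_lt_zero j)⟩
    | succ i ih =>
      obtain ⟨x, hxT, hxa⟩ := ih
      have hne : (VSet sel T i).Nonempty := ⟨toW (x.f i), x, hxT, hxa, rfl⟩
      have := hsel _ hne
      rw [← selFun_eq sel T i] at this
      obtain ⟨y, hyT, hya, hyv⟩ := this
      refine ⟨y, hyT, fun j hj => ?_⟩
      rcases Nat.lt_succ_iff_lt_or_eq.mp hj with h | h
      · exact hya j h
      · subst h; exact hyv
  intro i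
  obtain ⟨x, hxT, hxa⟩ := key i
  have hne : (VSet sel T i).Nonempty := ⟨toW (x.f i), x, hxT, hxa, rfl⟩
  have := hsel _ hne
  rw [← selFun_eq sel T i] at this
  obtain ⟨y, hyT, hya, hyv⟩ := this
  exact ⟨y, hyT, hya, hyv⟩

lemma selFun_init (hsel : ∀ V : Set (WithBot A), V.Nonempty → sel V ∈ V) (hT : T.Nonempty) (i : ℕ) (h : selFun sel T i = ⊥) : selFun sel T (i + 1) = ⊥ := by
  obtain ⟨x, hxT, hxa, hxv⟩ := survivors hsel hT (i + 1)
  have hxi : x.f i = none := toW_eq_bot.mp ((hxa i (Nat.lt_succ_self i)).trans h)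
  have : x.f (i + 1) = none := x.init i hxi
  rw [← hxv, this, toW_none]

noncomputable def selStr (hsel : ∀ V : Set (WithBot A), V.Nonempty → sel V ∈ V) (hT : T.Nonempty) : ColexStr A where
  f i := fromW (selFun sel T i)
  init i h := by
    have hb : selFun sel T i = ⊥ := by
      have := congrArg toW h
      rwa [toW_fromW, toW_none] at this
    show fromW (selFun sel T (i + 1)) = none
    rw [selFun_init hsel hT i hb]; rfl

lemma wfn_selStr (hsel : ∀ V : Set (WithBot A), V.Nonempty → sel V ∈ V) (hT : T.Nonempty) (i : ℕ) : wfn (selStr hsel hT) i = selFun sel T i := by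
  simp [wfn, selStr]

end Sel

section Main
variable {A : Type*} [Fintype A] [LinearOrder A]
variable {sel : Set (WithBot A) → WithBot A} {T : Set (ColexStr A)}

lemma sel_upperBound (hsel : ∀ V : Set (WithBot A), V.Nonempty → sel V ∈ V)
    (hub : ∀ (V : Set (WithBot A)) v, v ∈ V → v ≤ sel V) (hT : T.Nonempty)
    {x : ColexStr A} (hx : x ∈ T) : ColexLe x (selStr hsel hT) := by
  set γ := selStr hsel hT with hγ
  by_cases h : x = γ
  · exact Or.inr h
  · left
    have hne : ∃ n, wfn x n ≠ wfn γ n := by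
      by_contra hc
      push_neg at hc
      exact h (wfn_inj (funext hc))
    set n := Nat.find hne with hn
    have hsp : wfn x n ≠ wfn γ n := Nat.find_spec hne
    have hag : ∀ j < n, wfn x j = wfn γ j := fun j hj => by
      have := Nat.find_min hne hj; push_neg at this; exact this
    refine (colexLt_iff x γ).mpr ⟨n, hag, ?_⟩
    have hga : ∀ j, wfn γ j = selFun sel T j := wfn_selStr hsel hT
    have hmem : toW (x.f n) ∈ VSet sel T n :=
      ⟨x, hx, fun j hj => (hag j hj).trans (hga j), rfl⟩
    have hle : toW (x.f n) ≤ selFun sel T n := by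
      rw [selFun_eq]; exact hub _ _ hmem
    have hsp' : toW (x.f n) ≠ selFun sel T n := by rw [← hga n]; exact hsp
    show toW (x.f n) < wfn γ n
    rw [hga n]
    exact lt_of_le_of_ne hle hsp'

lemma sel_leastUB (hsel : ∀ V : Set (WithBot A), V.Nonempty → sel V ∈ V)
    (hT : T.Nonempty) {u : ColexStr A} (hu : ∀ x ∈ T, ColexLe x u) :
    ColexLe (selStr hsel hT) u := by
  set γ := selStr hsel hT with hγ
  by_contra h
  rw [ColexLe] at h
  push_neg at h
  obtain ⟨hlt, hne⟩ := h
  have huγ : MyLt u γ := by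
    rcases myLt_total hne with h1 | h1
    · exact absurd ((colexLt_iff γ u).mpr h1) hlt
    · exact h1
  obtain ⟨n, hag, hl⟩ := huγ
  obtain ⟨x, hxT, hxa, hxv⟩ := survivors hsel hT n
  have hga : ∀ j, wfn γ j = selFun sel T j := wfn_selStr hsel hT
  have hux : MyLt u x := by
    refine ⟨n, fun j hj => ?_, ?_⟩
    · rw [hag j hj, hga j, ← hxa j hj]; rfl
    · show toW (u.f n) < toW (x.f n)
      rw [hxv, ← hga n]
      exact hl
  rcases hu x hxT with hxu | hxu
  · exact myLt_irrefl u (myLt_trans hux ((colexLt_iff x u).mp hxu))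
  · subst hxu; exact myLt_irrefl x hux

lemma sel_lowerBound (hsel : ∀ V : Set (WithBot A), V.Nonempty → sel V ∈ V)
    (hlb : ∀ (V : Set (WithBot A)) v, v ∈ V → sel V ≤ v) (hT : T.Nonempty)
    {x : ColexStr A} (hx : x ∈ T) : ColexLe (selStr hsel hT) x := by
  set γ := selStr hsel hT with hγ
  by_cases h : γ = x
  · exact Or.inr h
  · left
    have hne : ∃ n, wfn γ n ≠ wfn x n := by
      by_contra hc
      push_neg at hc
      exact h (wfn_inj (funext hc))
    set n := Nat.find hne with hn
    have hsp : wfn γ n ≠ wfn x n := Nat.find_spec hne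
    have hag : ∀ j < n, wfn γ j = wfn x j := fun j hj => by
      have := Nat.find_min hne hj; push_neg at this; exact this
    refine (colexLt_iff γ x).mpr ⟨n, hag, ?_⟩
    have hga : ∀ j, wfn γ j = selFun sel T j := wfn_selStr hsel hT
    have hmem : toW (x.f n) ∈ VSet sel T n :=
      ⟨x, hx, fun j hj => (hag j hj).symm.trans (hga j), rfl⟩
    have hle : selFun sel T n ≤ toW (x.f n) := by
      rw [selFun_eq]; exact hlb _ _ hmem
    have hsp' : selFun sel T n ≠ toW (x.f n) := by rw [← hga n]; exact hsp
    show wfn γ n < toW (x.f n)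
    rw [hga n]
    exact lt_of_le_of_ne hle hsp'

lemma sel_greatestLB (hsel : ∀ V : Set (WithBot A), V.Nonempty → sel V ∈ V)
    (hT : T.Nonempty) {u : ColexStr A} (hu : ∀ x ∈ T, ColexLe u x) :
    ColexLe u (selStr hsel hT) := by
  set γ := selStr hsel hT with hγ
  by_contra h
  rw [ColexLe] at h
  push_neg at h
  obtain ⟨hlt, hne⟩ := h
  have hγu : MyLt γ u := by
    rcases myLt_total hne with h1 | h1
    · exact absurd ((colexLt_iff u γ).mpr h1) hlt
    · exact h1
  obtain ⟨n, hag, hl⟩ := hγu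
  obtain ⟨x, hxT, hxa, hxv⟩ := survivors hsel hT n
  have hga : ∀ j, wfn γ j = selFun sel T j := wfn_selStr hsel hT
  have hxu : MyLt x u := by
    refine ⟨n, fun j hj => ?_, ?_⟩
    · exact (hxa j hj).trans ((hga j).symm.trans (hag j hj))
    · show toW (x.f n) < wfn u n
      rw [hxv, ← hga n]
      exact hl
  rcases hu x hxT with hux | hux
  · exact myLt_irrefl x (myLt_trans hxu ((colexLt_iff u x).mp hux))
  · exact myLt_irrefl x (hux ▸ hxu)

end Main

/-- Over a finite non-empty totally ordered alphabet, the co-lexicographic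
order on `Σ^• = Σ* ∪ Σ^ω` is a (strict) total order, and every non-empty set
of finite strings has a greatest lower bound and a least upper bound in
`(Σ^•, ≤)`. -/
theorem stmt12 {A : Type*} [Fintype A] [Nonempty A] [LinearOrder A] :
    (∀ α : ColexStr A, ¬ ColexLt α α) ∧
    (∀ α β γ : ColexStr A, ColexLt α β → ColexLt β γ → ColexLt α γ) ∧
    (∀ α β : ColexStr A, α ≠ β → ColexLt α β ∨ ColexLt β α) ∧
    (∀ S : Set (List A), S.Nonempty →
      (∃ γ : ColexStr A, IsColexGLB S γ) ∧ (∃ γ : ColexStr A, IsColexLUB S γ)) := by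
  refine ⟨?_, ?_, ?_, ?_⟩
  · intro α h
    exact myLt_irrefl α ((colexLt_iff α α).mp h)
  · intro α β γ h1 h2
    exact (colexLt_iff α γ).mpr
      (myLt_trans ((colexLt_iff α β).mp h1) ((colexLt_iff β γ).mp h2))
  · intro α β h
    rcases myLt_total h with h1 | h1
    · exact Or.inl ((colexLt_iff α β).mpr h1)
    · exact Or.inr ((colexLt_iff β α).mpr h1)
  · intro S hS
    have hT : (ofList '' S : Set (ColexStr A)).Nonempty := hS.image _
    constructor
    · refine ⟨selStr (fun V h => pickMin_mem h) hT, ?_, ?_⟩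
      · intro l hl
        exact sel_lowerBound _ (fun V v hv => pickMin_le hv) hT ⟨l, hl, rfl⟩
      · intro γ' hγ'
        refine sel_greatestLB _ hT ?_
        rintro x ⟨l, hl, rfl⟩
        exact hγ' l hl
    · refine ⟨selStr (fun V h => pickMax_mem h) hT, ?_, ?_⟩
      · intro l hl
        exact sel_upperBound _ (fun V v hv => le_pickMax hv) hT ⟨l, hl, rfl⟩
      · intro γ' hγ'
        refine sel_leastUB _ hT ?_
        rintro x ⟨l, hl, rfl⟩
        exact hγ' l hl
end

section
/- Let A = (Q, δ, s) be an input-consistent DFA whose source has no in-going transitions and in which every state is reachable from s. Then there exists a map π : Q ∖ {s} → Q with v ∈ δ_{λ(v)}(π(v)) for every v ∈ Q ∖ {s}, such that for every v ∈ Q ∖ {s}: if there exists k ≥ 1 with π^k(v) = s (taking the least such k), then inf S_v is the finite string λ(π^{k−1}(v)) ⋯ λ(π(v)) λ(v); and if no iterate π^k(v) equals s, then inf S_v is the left-infinite string whose i-th character from the right end is λ(π^{i−1}(v)) for every i ≥ 1. -/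
namespace ColexAux

variable {A : Type*}

lemma cext {α β : ColexStr A} (h : ∀ i, α.f i = β.f i) : α = β := by
  cases α; cases β
  simp only [ColexStr.mk.injEq]
  exact funext h

lemma none_mono (γ : ColexStr A) {i j : ℕ} (hij : i ≤ j) (h : γ.f i = none) :
    γ.f j = none := by
  obtain ⟨d, rfl⟩ := Nat.exists_eq_add_of_le hij
  clear hij
  induction d with
  | zero => simpa using h
  | succ d ih => exact γ.init _ ih

lemma some_anti (γ : ColexStr A) {i j : ℕ} (hij : i ≤ j) (h : γ.f j ≠ none) :
    γ.f i ≠ none := fun hc => h (none_mono γ hij hc)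

set_option linter.unusedSectionVars false

lemma exists_first_diff {α β : ColexStr A} (h : ¬ ∀ i, α.f i = β.f i) :
    ∃ n, α.f n ≠ β.f n ∧ ∀ i < n, α.f i = β.f i := by
  push_neg at h
  classical
  exact ⟨Nat.find h, Nat.find_spec h, fun i hi => not_not.mp (Nat.find_min h hi)⟩

section LO
variable [LinearOrder A]

lemma colex_trichotomy (α β : ColexStr A) : ColexLt α β ∨ α = β ∨ ColexLt β α := by
  by_cases h : ∀ i, α.f i = β.f i
  · exact Or.inr (Or.inl (cext h))
  · obtain ⟨n, hne, hag⟩ := exists_first_diff h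
    rcases ha : α.f n with _ | a <;> rcases hb : β.f n with _ | b
    · rw [ha, hb] at hne; exact absurd rfl hne
    · refine Or.inl (Or.inl ⟨fun i hi => ?_, n, ha, by rw [hb]; simp⟩)
      have hin : i < n := by
        by_contra hc
        exact hi (none_mono α (i := n) (j := i) (by omega) ha)
      exact (hag i hin).symm
    · refine Or.inr (Or.inr (Or.inl ⟨fun i hi => ?_, n, hb, by rw [ha]; simp⟩))
      have hin : i < n := by
        by_contra hc
        exact hi (none_mono β (i := n) (j := i) (by omega) hb)
      exact hag i hin
    · have hab : a ≠ b := by rw [ha, hb] at hne; simpa using hne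
      rcases lt_or_gt_of_ne hab with hlt | hlt
      · exact Or.inl (Or.inr ⟨n, a, b, hlt, ha, hb, hag⟩)
      · exact Or.inr (Or.inr (Or.inr ⟨n, b, a, hlt, hb, ha,
          fun i hi => (hag i hi).symm⟩))

lemma colex_asymm {α β : ColexStr A} (h1 : ColexLt α β) (h2 : ColexLt β α) : False := by
  rcases h1 with ⟨hag1, i1, hi1, hi1'⟩ | ⟨n1, a1, b1, hab1, ha1, hb1, hag1⟩ <;>
    rcases h2 with ⟨hag2, i2, hi2, hi2'⟩ | ⟨n2, a2, b2, hab2, ha2, hb2, hag2⟩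
  · exact hi1' (by rw [← hag2 i1 hi1']; exact hi1)
  · have h3 := hag1 n2 (by rw [hb2]; simp)
    rw [ha2, hb2] at h3
    simp only [Option.some.injEq] at h3
    exact hab2.ne h3
  · have h3 := hag2 n1 (by rw [hb1]; simp)
    rw [ha1, hb1] at h3
    simp only [Option.some.injEq] at h3
    exact hab1.ne h3
  · rcases lt_trichotomy n1 n2 with h | h | h
    · have h3 := hag2 n1 h
      rw [ha1, hb1] at h3
      simp only [Option.some.injEq] at h3
      exact hab1.ne h3.symm
    · subst h
      rw [ha2] at hb1; rw [ha1] at hb2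
      simp only [Option.some.injEq] at hb1 hb2
      subst hb1; subst hb2
      exact absurd hab2 (not_lt_of_gt hab1)
    · have h3 := hag1 n2 h
      rw [ha2, hb2] at h3
      simp only [Option.some.injEq] at h3
      exact hab2.ne h3.symm

lemma colex_irrefl {α : ColexStr A} (h : ColexLt α α) : False := colex_asymm h h

lemma colex_lt_trans {α β γ : ColexStr A} (h1 : ColexLt α β) (h2 : ColexLt β γ) :
    ColexLt α γ := by
  rcases h1 with ⟨hag1, i1, hi1, hi1'⟩ | ⟨n1, a1, b1, hab1, ha1, hb1, hag1⟩ <;>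
    rcases h2 with ⟨hag2, i2, hi2, hi2'⟩ | ⟨n2, a2, b2, hab2, ha2, hb2, hag2⟩
  · refine Or.inl ⟨fun i hi => by rw [hag2 i (by rw [hag1 i hi]; exact hi), hag1 i hi],
      i1, hi1, ?_⟩
    rw [hag2 i1 hi1']
    exact hi1'
  · by_cases hn : α.f n2 = none
    · refine Or.inl ⟨fun i hi => ?_, n2, hn, by rw [hb2]; simp⟩
      have hin : i < n2 := by
        by_contra hc; exact hi (none_mono α (i := n2) (j := i) (by omega) hn)
      rw [← hag2 i hin]
      exact hag1 i hi
    · have h3 : β.f n2 = α.f n2 := hag1 n2 hn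
      rw [ha2] at h3
      refine Or.inr ⟨n2, a2, b2, hab2, h3.symm, hb2, fun i hi => ?_⟩
      have hαi : α.f i ≠ none := some_anti α (i := i) (j := n2) (by omega) hn
      rw [← hag2 i hi]
      exact (hag1 i hαi).symm
  · have h3 : γ.f n1 = β.f n1 := hag2 n1 (by rw [hb1]; simp)
    rw [hb1] at h3
    refine Or.inr ⟨n1, a1, b1, hab1, ha1, h3, fun i hi => ?_⟩
    have hβi : β.f i ≠ none :=
      some_anti β (i := i) (j := n1) (by omega) (by rw [hb1]; simp)
    rw [hag1 i hi]
    exact (hag2 i hβi).symm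
  · rcases lt_trichotomy n1 n2 with h | h | h
    · have h3 : γ.f n1 = β.f n1 := (hag2 n1 h).symm
      rw [hb1] at h3
      exact Or.inr ⟨n1, a1, b1, hab1, ha1, h3, fun i hi =>
        (hag1 i hi).trans (hag2 i (by omega))⟩
    · subst h
      rw [ha2] at hb1
      simp only [Option.some.injEq] at hb1
      subst hb1
      exact Or.inr ⟨n1, a1, b2, lt_trans hab1 hab2, ha1, hb2, fun i hi =>
        (hag1 i hi).trans (hag2 i hi)⟩
    · have h3 : α.f n2 = β.f n2 := hag1 n2 h
      rw [ha2] at h3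
      exact Or.inr ⟨n2, a2, b2, hab2, h3, hb2, fun i hi =>
        (hag1 i (by omega)).trans (hag2 i hi)⟩

lemma colex_le_trans {α β γ : ColexStr A} (h1 : ColexLe α β) (h2 : ColexLe β γ) :
    ColexLe α γ := by
  rcases h1 with h1 | rfl
  · rcases h2 with h2 | rfl
    · exact Or.inl (colex_lt_trans h1 h2)
    · exact Or.inl h1
  · exact h2

lemma colex_le_antisymm {α β : ColexStr A} (h1 : ColexLe α β) (h2 : ColexLe β α) :
    α = β := by
  rcases h1 with h1 | rfl
  · rcases h2 with h2 | rfl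
    · exact absurd (colex_asymm h1 h2) (by simp)
    · rfl
  · rfl

lemma not_lt_iff_le {α β : ColexStr A} : ¬ ColexLt β α ↔ ColexLe α β := by
  constructor
  · intro h
    rcases colex_trichotomy α β with h' | h' | h'
    · exact Or.inl h'
    · exact Or.inr h'
    · exact absurd h' h
  · rintro (h | rfl) hc
    · exact colex_asymm h hc
    · exact colex_irrefl hc

lemma le_of_le_of_lt_false {α β : ColexStr A} (h1 : ColexLe α β) (h2 : ColexLt β α) :
    False := by
  rcases h1 with h1 | rfl
  · exact colex_asymm h1 h2
  · exact colex_irrefl h2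

lemma glb_unique {S : Set (List A)} {x y : ColexStr A} (hx : IsColexGLB S x)
    (hy : IsColexGLB S y) : x = y :=
  colex_le_antisymm (hy.2 x hx.1) (hx.2 y hy.1)

end LO

end ColexAux

namespace ColexAux

variable {A : Type*}
set_option linter.unusedSectionVars false

lemma ofList_f (l : List A) (j : ℕ) :
    (ofList l).f j = if h : j < l.length then some (l[l.length - 1 - j]'(by omega)) else none :=
  rfl

lemma ofList_f_of_lt (l : List A) {j : ℕ} (h : j < l.length) :
    (ofList l).f j = some (l[l.length - 1 - j]'(by omega)) := by
  rw [ofList_f, dif_pos h]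

lemma ofList_f_of_ge (l : List A) {j : ℕ} (h : l.length ≤ j) :
    (ofList l).f j = none := by
  rw [ofList_f, dif_neg (by omega)]

/-- append a character on the right of a colex string -/
def appendC (γ : ColexStr A) (c : A) : ColexStr A where
  f n := match n with
    | 0 => some c
    | n + 1 => γ.f n
  init n h := by
    match n with
    | 0 => simp at h
    | n + 1 => exact γ.init n h

@[simp] lemma appendC_f_zero (γ : ColexStr A) (c : A) : (appendC γ c).f 0 = some c := rfl
@[simp] lemma appendC_f_succ (γ : ColexStr A) (c : A) (n : ℕ) :
    (appendC γ c).f (n + 1) = γ.f n := rfl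

lemma ofList_append_singleton (l : List A) (c : A) :
    ofList (l ++ [c]) = appendC (ofList l) c := by
  apply cext
  intro i
  match i with
  | 0 =>
    rw [appendC_f_zero, ofList_f_of_lt (l ++ [c]) (by simp)]
    congr 1
    rw [List.getElem_append_right (by simp)]
    simp
  | i + 1 =>
    rw [appendC_f_succ]
    by_cases h : i < l.length
    · rw [ofList_f_of_lt (l ++ [c]) (by simp; omega), ofList_f_of_lt l h]
      congr 1
      rw [List.getElem_append_left (by simp; omega)]
      congr 1
      simp
      omega
    · rw [ofList_f_of_ge (l ++ [c]) (by simp; omega), ofList_f_of_ge l (by omega)]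

lemma ofList_append_f (l w : List A) {j : ℕ} (hj : j < w.length) :
    (ofList (l ++ w)).f j = (ofList w).f j := by
  rw [ofList_f_of_lt (l ++ w) (by simp; omega), ofList_f_of_lt w hj]
  congr 1
  rw [List.getElem_append_right (by simp; omega)]
  congr 1
  simp
  omega

section LO
variable [LinearOrder A]

lemma appendC_lt_mono {γ γ' : ColexStr A} (c : A) (h : ColexLt γ γ') :
    ColexLt (appendC γ c) (appendC γ' c) := by
  rcases h with ⟨hag, i0, h1, h2⟩ | ⟨n, a, b, hab, ha, hb, hag⟩
  · refine Or.inl ⟨fun i hi => ?_, i0 + 1, by simpa using h1, by simpa using h2⟩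
    match i with
    | 0 => rfl
    | i + 1 =>
      rw [appendC_f_succ] at hi ⊢
      exact hag i hi
  · refine Or.inr ⟨n + 1, a, b, hab, by simpa using ha, by simpa using hb, fun i hi => ?_⟩
    match i with
    | 0 => rfl
    | i + 1 =>
      rw [appendC_f_succ, appendC_f_succ]
      exact hag i (by omega)

lemma appendC_le_mono {γ γ' : ColexStr A} (c : A) (h : ColexLe γ γ') :
    ColexLe (appendC γ c) (appendC γ' c) := by
  rcases h with h | rfl
  · exact Or.inl (appendC_lt_mono c h)
  · exact Or.inr rfl

lemma appendC_inj {γ γ' : ColexStr A} {c : A} (h : appendC γ c = appendC γ' c) :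
    γ = γ' := by
  apply cext
  intro i
  have := congrArg ColexStr.f h
  have h2 := congrFun this (i + 1)
  simpa using h2

lemma appendC_le_reflect {γ γ' : ColexStr A} {c : A}
    (h : ColexLe (appendC γ c) (appendC γ' c)) : ColexLe γ γ' := by
  rcases h with h | h
  · rcases h with ⟨hag, i0, h1, h2⟩ | ⟨n, a, b, hab, ha, hb, hag⟩
    · match i0 with
      | 0 => simp at h1
      | i0 + 1 =>
        rw [appendC_f_succ] at h1 h2
        refine Or.inl (Or.inl ⟨fun i hi => ?_, i0, h1, h2⟩)
        have := hag (i + 1) (by simpa using hi)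
        simpa using this
    · match n with
      | 0 =>
        simp only [appendC_f_zero, Option.some.injEq] at ha hb
        subst ha; subst hb
        exact absurd hab (lt_irrefl _)
      | n + 1 =>
        rw [appendC_f_succ] at ha hb
        refine Or.inl (Or.inr ⟨n, a, b, hab, ha, hb, fun i hi => ?_⟩)
        have := hag (i + 1) (by omega)
        simpa using this
  · exact Or.inr (appendC_inj h)

end LO

/-- strip the last character -/
def tailC (γ : ColexStr A) : ColexStr A where
  f n := γ.f (n + 1)
  init n h := γ.init (n + 1) h

lemma appendC_tailC {γ : ColexStr A} {c : A} (h : γ.f 0 = some c) :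
    appendC (tailC γ) c = γ := by
  apply cext
  intro i
  match i with
  | 0 => rw [appendC_f_zero, h]
  | i + 1 => rfl

end ColexAux

namespace ColexAux

variable {A : Type*} [Fintype A] [LinearOrder A]
set_option linter.unusedSectionVars false
attribute [local instance] Classical.propDecidable

lemma getElem_idx_congr (l : List A) {i j : ℕ} (h : i = j) (hi : i < l.length) :
    l[i]'hi = l[j]'(h ▸ hi) := by subst h; rfl

/-- set of last letters of the nonempty strings in `T` -/
def lastLetters (T : Set (List A)) : Set A := {a | ∃ β, β ++ [a] ∈ T}

noncomputable def minLast (T : Set (List A)) : Option A :=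
  if h : (lastLetters T).Nonempty then
    some (Set.exists_min_image (lastLetters T) id (Set.toFinite _) h).choose
  else none

lemma minLast_spec {T : Set (List A)} {a : A} (h : minLast T = some a) :
    a ∈ lastLetters T ∧ ∀ b ∈ lastLetters T, a ≤ b := by
  rw [minLast] at h
  split_ifs at h with h'
  · simp only [Option.some.injEq] at h
    subst h
    obtain ⟨h1, h2⟩ := (Set.exists_min_image (lastLetters T) id (Set.toFinite _) h').choose_spec
    exact ⟨h1, h2⟩

lemma minLast_mem {T : Set (List A)} {a : A} (h : minLast T = some a) :
    a ∈ lastLetters T := (minLast_spec h).1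

lemma minLast_le {T : Set (List A)} {a b : A} (h : minLast T = some a)
    (hb : b ∈ lastLetters T) : a ≤ b := (minLast_spec h).2 b hb

lemma minLast_eq_none {T : Set (List A)} (h : minLast T = none) :
    lastLetters T = ∅ := by
  rw [minLast] at h
  split_ifs at h with h'
  rwa [Set.not_nonempty_iff_eq_empty] at h'

noncomputable def resid (S : Set (List A)) : ℕ → Set (List A)
  | 0 => S
  | n + 1 =>
    if [] ∈ resid S n then ∅
    else
      match minLast (resid S n) with
      | none => ∅
      | some a => {β | β ++ [a] ∈ resid S n}

noncomputable def infStr (S : Set (List A)) : ColexStr A where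
  f n := if [] ∈ resid S n then none else minLast (resid S n)
  init n h := by
    try dsimp only at h ⊢
    by_cases h1 : [] ∈ resid S n
    · have h2 : resid S (n + 1) = ∅ := by rw [resid, if_pos h1]
      rw [h2]
      have : minLast (∅ : Set (List A)) = none := by
        rw [minLast, dif_neg]
        simp [lastLetters]
      simp [this]
    · rw [if_neg h1] at h
      have h2 : resid S (n + 1) = ∅ := by
        rw [resid, if_neg h1, h]
      rw [h2]
      have : minLast (∅ : Set (List A)) = none := by
        rw [minLast, dif_neg]
        simp [lastLetters]
      simp [this]

lemma infStr_f (S : Set (List A)) (n : ℕ) :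
    (infStr S).f n = if [] ∈ resid S n then none else minLast (resid S n) := rfl

lemma resid_succ_of_some {S : Set (List A)} {n : ℕ} {a : A}
    (h1 : [] ∉ resid S n) (h2 : minLast (resid S n) = some a) :
    resid S (n + 1) = {β | β ++ [a] ∈ resid S n} := by
  rw [resid, if_neg h1, h2]

lemma infStr_f_some {S : Set (List A)} {n : ℕ} {a : A}
    (h : (infStr S).f n = some a) :
    [] ∉ resid S n ∧ minLast (resid S n) = some a := by
  rw [infStr_f] at h
  split_ifs at h with h1
  exact ⟨h1, h⟩

/-- nonemptiness of residuals as long as the inf has characters -/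
lemma resid_nonempty {S : Set (List A)} (hS : S.Nonempty) :
    ∀ n, (∀ j < n, (infStr S).f j ≠ none) → (resid S n).Nonempty := by
  intro n
  induction n with
  | zero => exact fun _ => hS
  | succ n ih =>
    intro h
    have hn := ih (fun j hj => h j (by omega))
    have hfn := h n (by omega)
    rcases hfna : (infStr S).f n with _ | a
    · exact absurd hfna hfn
    · obtain ⟨h1, h2⟩ := infStr_f_some hfna
      obtain ⟨β, hβ⟩ := minLast_mem h2
      rw [resid_succ_of_some h1 h2]
      exact ⟨β, hβ⟩

/-- the word of the first `n` characters of the inf (as a list, rightmost char last) -/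
noncomputable def wlist (S : Set (List A)) : ℕ → List A
  | 0 => []
  | n + 1 =>
    match (infStr S).f n with
    | some a => a :: wlist S n
    | none => wlist S n

lemma wlist_succ_of_some {S : Set (List A)} {n : ℕ} {a : A}
    (h : (infStr S).f n = some a) : wlist S (n + 1) = a :: wlist S n := by
  rw [wlist, h]

lemma resid_eq_wlist {S : Set (List A)} :
    ∀ n, (∀ j < n, (infStr S).f j ≠ none) →
      ∀ β, (β ∈ resid S n ↔ β ++ wlist S n ∈ S) := by
  intro n
  induction n with
  | zero => intro _ β; simp [resid, wlist]
  | succ n ih =>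
    intro h β
    have hfn := h n (by omega)
    rcases hfna : (infStr S).f n with _ | a
    · exact absurd hfna hfn
    · obtain ⟨h1, h2⟩ := infStr_f_some hfna
      rw [resid_succ_of_some h1 h2, wlist_succ_of_some hfna]
      have := ih (fun j hj => h j (by omega)) (β ++ [a])
      simp only [Set.mem_setOf_eq]
      rw [this]
      simp

lemma wlist_length {S : Set (List A)} :
    ∀ n, (∀ j < n, (infStr S).f j ≠ none) → (wlist S n).length = n := by
  intro n
  induction n with
  | zero => intro _; rfl
  | succ n ih =>
    intro h
    rcases hfna : (infStr S).f n with _ | a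
    · exact absurd hfna (h n (by omega))
    · rw [wlist_succ_of_some hfna]
      simp [ih (fun j hj => h j (by omega))]

lemma wlist_chars {S : Set (List A)} :
    ∀ n, (∀ j < n, (infStr S).f j ≠ none) →
      ∀ j < n, (ofList (wlist S n)).f j = (infStr S).f j := by
  intro n
  induction n with
  | zero => intro _ j hj; omega
  | succ n ih =>
    intro h j hj
    rcases hfna : (infStr S).f n with _ | a
    · exact absurd hfna (h n (by omega))
    · have hlen : (wlist S n).length = n := wlist_length n (fun j hj => h j (by omega))
      rw [wlist_succ_of_some hfna]
      rcases Nat.lt_or_ge j n with hjn | hjn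
      · have h5 := ih (fun j hj => h j (by omega)) j hjn
        rw [show (a :: wlist S n) = [a] ++ wlist S n from rfl,
          ofList_append_f _ _ (by omega)]
        exact h5
      · have hjn' : j = n := by omega
        rw [hjn', ofList_f_of_lt _ (by simp; omega), hfna]
        congr 1
        rw [getElem_idx_congr (a :: wlist S n)
          (show (a :: wlist S n).length - 1 - n = 0 by simp [hlen])]
        exact List.getElem_cons_zero _ _ _

lemma take_mem_resid {S : Set (List A)} :
    ∀ n (α : List A), α ∈ S → (∀ j < n, (infStr S).f j = (ofList α).f j) →
      n ≤ α.length → α.take (α.length - n) ∈ resid S n := by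
  intro n
  induction n with
  | zero => intro α hα _ _; simpa [resid] using hα
  | succ n ih =>
    intro α hα hag hlen
    have hβ := ih α hα (fun j hj => hag j (by omega)) (by omega)
    have hofn : (ofList α).f n = some (α[α.length - 1 - n]'(by omega)) :=
      ofList_f_of_lt α (by omega)
    have hγn : (infStr S).f n = some (α[α.length - 1 - n]'(by omega)) := by
      rw [hag n (by omega), hofn]
    obtain ⟨h1, h2⟩ := infStr_f_some hγn
    rw [resid_succ_of_some h1 h2]
    simp only [Set.mem_setOf_eq]
    have htake : α.take (α.length - (n + 1)) ++ [α[α.length - 1 - n]'(by omega)] =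
        α.take (α.length - n) := by
      have h3 : α.length - n = (α.length - (n + 1)) + 1 := by omega
      rw [h3, List.take_succ]
      congr 1
      rw [List.getElem?_eq_getElem (by omega)]
      simp only [Option.toList_some]
      congr 2
      omega
    rw [htake]
    exact hβ

end ColexAux

namespace ColexAux

variable {A : Type*} [Fintype A] [LinearOrder A]
set_option linter.unusedSectionVars false
attribute [local instance] Classical.propDecidable

lemma take_decomp (α : List A) {n : ℕ} (h : n < α.length) :
    α.take (α.length - n) =
      α.take (α.length - (n + 1)) ++ [α[α.length - 1 - n]'(by omega)] := by
  have h3 : α.length - n = (α.length - (n + 1)) + 1 := by omega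
  rw [h3, List.take_succ]
  congr 1
  rw [List.getElem?_eq_getElem (by omega)]
  simp only [Option.toList_some]
  congr 2
  omega

lemma infStr_lower {S : Set (List A)} (α : List A) (hα : α ∈ S) :
    ColexLe (infStr S) (ofList α) := by
  by_cases hall : ∀ j, (infStr S).f j = (ofList α).f j
  · exact Or.inr (cext hall)
  · obtain ⟨n, hne, hag⟩ := exists_first_diff hall
    have hnlen : n ≤ α.length := by
      by_contra hc
      push_neg at hc
      have h1 : (infStr S).f α.length = none := by
        rw [hag α.length hc]
        exact ofList_f_of_ge α le_rfl
      have h2 : (infStr S).f n = none :=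
        none_mono _ (i := α.length) (j := n) (by omega) h1
      rw [h2, ofList_f_of_ge α (by omega)] at hne
      exact hne rfl
    have hβ := take_mem_resid n α hα hag hnlen
    rcases Nat.eq_or_lt_of_le hnlen with heq | hlt
    · exfalso
      have h0 : α.take (α.length - n) = [] := by
        rw [← heq]
        simp
      rw [h0] at hβ
      have h1 : (infStr S).f n = none := by
        rw [infStr_f, if_pos hβ]
      rw [h1, ofList_f_of_ge α (by omega)] at hne
      exact hne rfl
    · have hofb : (ofList α).f n = some (α[α.length - 1 - n]'(by omega)) :=
        ofList_f_of_lt α hlt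
      by_cases hnil : [] ∈ resid S n
      · have hfn : (infStr S).f n = none := by rw [infStr_f, if_pos hnil]
        refine Or.inl (Or.inl ⟨fun i hi => ?_, n, hfn, by rw [hofb]; simp⟩)
        have hin : i < n := by
          by_contra hc
          exact hi (none_mono _ (i := n) (j := i) (by omega) hfn)
        exact (hag i hin).symm
      · have hmem : α[α.length - 1 - n]'(by omega) ∈ lastLetters (resid S n) := by
          refine ⟨α.take (α.length - (n + 1)), ?_⟩
          rw [← take_decomp α hlt]
          exact hβ
        rcases hml : minLast (resid S n) with _ | a
        · exfalso
          rw [minLast_eq_none hml] at hmem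
          exact hmem
        · have hfa : (infStr S).f n = some a := by
            rw [infStr_f, if_neg hnil, hml]
          have hab : a ≠ α[α.length - 1 - n]'(by omega) := by
            intro hc
            rw [hfa, hofb, hc] at hne
            exact hne rfl
          exact Or.inl (Or.inr ⟨n, a, _, lt_of_le_of_ne (minLast_le hml hmem) hab,
            hfa, hofb, hag⟩)

lemma infStr_greatest {S : Set (List A)} (hS : S.Nonempty) (γ' : ColexStr A)
    (hγ' : ∀ l ∈ S, ColexLe γ' (ofList l)) : ColexLe γ' (infStr S) := by
  rcases colex_trichotomy (infStr S) γ' with h | h | h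
  · exfalso
    rcases h with ⟨hag, i0, h1, h2⟩ | ⟨n, a, b, hab, ha, hb, hagr⟩
    · have hex : ∃ i, (infStr S).f i = none := ⟨i0, h1⟩
      obtain ⟨n, hn, hnlt⟩ :
          ∃ n, (infStr S).f n = none ∧ ∀ j < n, (infStr S).f j ≠ none :=
        ⟨Nat.find hex, Nat.find_spec hex, fun j hj => Nat.find_min hex hj⟩
      have hni0 : n ≤ i0 := by
        by_contra hc
        exact hnlt i0 (by omega) h1
      have hγ'n : γ'.f n ≠ none := by
        intro hc
        exact h2 (none_mono γ' hni0 hc)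
      have hnil : [] ∈ resid S n := by
        rw [infStr_f] at hn
        split_ifs at hn with h3
        · exact h3
        · obtain ⟨β0, hβ0⟩ := resid_nonempty hS n hnlt
          rcases List.eq_nil_or_concat' β0 with rfl | ⟨l, c, rfl⟩
          · exact hβ0
          · exfalso
            have : c ∈ lastLetters (resid S n) := ⟨l, hβ0⟩
            rw [minLast_eq_none hn] at this
            exact this
      have hw : wlist S n ∈ S := by
        have := (resid_eq_wlist n hnlt []).mp hnil
        simpa using this
      have hwlen : (wlist S n).length = n := wlist_length n hnlt
      rcases hγ' _ hw with hlt | heq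
      · rcases hlt with ⟨hag2, i2, hi2, hi2'⟩ | ⟨m, c, d, hcd, hc, hd, hag2⟩
        · have hi2n : i2 < n := by
            by_contra hc2
            exact hi2' (ofList_f_of_ge _ (by omega))
          have h5 := hag i2 (hnlt i2 hi2n)
          exact (hnlt i2 hi2n) (by rw [← h5]; exact hi2)
        · have hmn : m < n := by
            by_contra hc2
            rw [ofList_f_of_ge _ (by omega)] at hd
            simp at hd
          have h4 : (ofList (wlist S n)).f m = (infStr S).f m := wlist_chars n hnlt m hmn
          have h5 : γ'.f m = (infStr S).f m := hag m (hnlt m hmn)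
          rw [h4] at hd
          rw [h5, hd] at hc
          simp only [Option.some.injEq] at hc
          exact hcd.ne' hc
      · rw [heq] at hγ'n
        exact hγ'n (ofList_f_of_ge _ (by omega))
    · have hnlt : ∀ j < n, (infStr S).f j ≠ none := fun j hj =>
        some_anti _ (i := j) (j := n) (by omega) (by rw [ha]; simp)
      obtain ⟨h1, h2⟩ := infStr_f_some ha
      obtain ⟨β, hβ⟩ := minLast_mem h2
      have hαS : (β ++ [a]) ++ wlist S n ∈ S := (resid_eq_wlist n hnlt _).mp hβ
      have hwlen : (wlist S n).length = n := wlist_length n hnlt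
      have hfn : (ofList ((β ++ [a]) ++ wlist S n)).f n = some a := by
        rw [show (β ++ [a]) ++ wlist S n = β ++ ([a] ++ wlist S n) by simp]
        rw [ofList_append_f _ _ (by simp [hwlen])]
        rw [ofList_f_of_lt _ (by simp [hwlen])]
        congr 1
        rw [getElem_idx_congr _
          (show ([a] ++ wlist S n).length - 1 - n = 0 by simp [hwlen])]
        exact List.getElem_cons_zero _ _ _
      have hagree : ∀ i < n, (ofList ((β ++ [a]) ++ wlist S n)).f i = γ'.f i := by
        intro i hi
        rw [ofList_append_f _ _ (by omega)]
        rw [wlist_chars n hnlt i hi]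
        exact hagr i hi
      exact le_of_le_of_lt_false (hγ' _ hαS) (Or.inr ⟨n, a, b, hab, hfn, hb, hagree⟩)
  · exact Or.inr h.symm
  · exact Or.inl h

lemma infStr_isGLB {S : Set (List A)} (hS : S.Nonempty) : IsColexGLB S (infStr S) :=
  ⟨fun l hl => infStr_lower l hl, fun γ' hγ' => infStr_greatest hS γ' hγ'⟩

end ColexAux

namespace ColexAux

set_option linter.unusedSectionVars false

section Automaton

variable {Q A : Type*}

lemma mem_deltaStr_append (δ : Q → A → Set Q) (q v : Q) (l₁ l₂ : List A) :
    v ∈ deltaStr δ q (l₁ ++ l₂) ↔ ∃ x ∈ deltaStr δ q l₁, v ∈ deltaStr δ x l₂ := by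
  induction l₁ generalizing q with
  | nil => simp [deltaStr]
  | cons a l ih =>
    simp only [List.cons_append, deltaStr, Set.mem_iUnion, exists_prop]
    constructor
    · rintro ⟨x, hx, hv⟩
      obtain ⟨y, hy, hv'⟩ := (ih x).mp hv
      exact ⟨y, ⟨x, hx, hy⟩, hv'⟩
    · rintro ⟨y, ⟨x, hx, hy⟩, hv'⟩
      exact ⟨x, hx, (ih x).mpr ⟨y, hy, hv'⟩⟩

lemma mem_deltaStr_concat (δ : Q → A → Set Q) (q v : Q) (l : List A) (a : A) :
    v ∈ deltaStr δ q (l ++ [a]) ↔ ∃ x ∈ deltaStr δ q l, v ∈ δ x a := by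
  rw [mem_deltaStr_append]
  simp [deltaStr]

lemma deltaStr_source_nil (δ : Q → A → Set Q) (s : Q) (hs : ∀ u a, s ∉ δ u a) :
    ∀ (α : List A) (u : Q), s ∈ deltaStr δ u α → α = [] := by
  intro α
  induction α with
  | nil => intro _ _; rfl
  | cons a l ih =>
    intro u h
    exfalso
    simp only [deltaStr, Set.mem_iUnion, exists_prop] at h
    obtain ⟨x, hx, hsx⟩ := h
    have hl := ih x hsx
    subst hl
    simp only [deltaStr, Set.mem_singleton_iff] at hsx
    subst hsx
    exact hs u a hx

end Automaton

section Min

variable {A : Type*} [Fintype A] [LinearOrder A]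

lemma exists_min_pred {ι : Type*} (T : Set ι) (hfin : T.Finite) (hT : T.Nonempty)
    (g : ι → ColexStr A) : ∃ u ∈ T, ∀ u' ∈ T, ColexLe (g u) (g u') := by
  classical
  have main : ∀ t : Finset ι, t.Nonempty → ∃ u ∈ t, ∀ u' ∈ t, ColexLe (g u) (g u') := by
    intro t
    induction t using Finset.induction_on with
    | empty => intro ht; exact absurd ht (by simp)
    | @insert a t' ha ih =>
      intro _
      rcases t'.eq_empty_or_nonempty with rfl | ht'
      · refine ⟨a, by simp, fun u' hu' => ?_⟩
        simp only [Finset.mem_insert, Finset.notMem_empty, or_false] at hu'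
        subst hu'
        exact Or.inr rfl
      · obtain ⟨u0, hu0, hmin⟩ := ih ht'
        rcases colex_trichotomy (g a) (g u0) with h | h | h
        · refine ⟨a, Finset.mem_insert_self a t', fun u' hu' => ?_⟩
          rcases Finset.mem_insert.mp hu' with rfl | hu'
          · exact Or.inr rfl
          · exact colex_le_trans (Or.inl h) (hmin u' hu')
        · refine ⟨a, Finset.mem_insert_self a t', fun u' hu' => ?_⟩
          rcases Finset.mem_insert.mp hu' with rfl | hu'
          · exact Or.inr rfl
          · exact colex_le_trans (Or.inr h) (hmin u' hu')
        · refine ⟨u0, Finset.mem_insert_of_mem hu0, fun u' hu' => ?_⟩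
          rcases Finset.mem_insert.mp hu' with rfl | hu'
          · exact Or.inl h
          · exact hmin u' hu'
  obtain ⟨u, hu, hmin⟩ := main hfin.toFinset (by rwa [Set.Finite.toFinset_nonempty])
  rw [Set.Finite.mem_toFinset] at hu
  exact ⟨u, hu, fun u' hu' => hmin u' (by rwa [Set.Finite.mem_toFinset])⟩

end Min

section Key

variable {Q A : Type*} [Fintype A] [LinearOrder A]

lemma key_step (δ : Q → A → Set Q) (s : Q)
    (hreach : ∀ v : Q, ∃ α, v ∈ deltaStr δ s α)
    (lam : Q → A) (v u0 : Q) (hv : v ≠ s)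
    (hlamv : ∀ b : A, (∃ u, v ∈ δ u b) → b = lam v)
    (hu0 : v ∈ δ u0 (lam v))
    (hmin : ∀ u, v ∈ δ u (lam v) →
      ColexLe (infStr (reach δ s u0)) (infStr (reach δ s u))) :
    IsColexGLB (reach δ s v) (appendC (infStr (reach δ s u0)) (lam v)) := by
  have hne : ∀ u : Q, (reach δ s u).Nonempty := fun u => hreach u
  have hglb0 := infStr_isGLB (hne u0)
  constructor
  · intro α hα
    rcases List.eq_nil_or_concat' α with rfl | ⟨β, b, rfl⟩
    · exfalso
      have : v = s := by simpa [reach, deltaStr] using hα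
      exact hv this
    · rw [reach, Set.mem_setOf_eq, mem_deltaStr_concat] at hα
      obtain ⟨u, hu, hvu⟩ := hα
      have hb : b = lam v := hlamv b ⟨u, hvu⟩
      subst hb
      have h1 : ColexLe (infStr (reach δ s u0)) (infStr (reach δ s u)) := hmin u hvu
      have h2 : ColexLe (infStr (reach δ s u)) (ofList β) :=
        (infStr_isGLB (hne u)).1 β hu
      rw [ofList_append_singleton]
      exact appendC_le_mono _ (colex_le_trans h1 h2)
  · intro γ' hγ'
    rcases hf0 : γ'.f 0 with _ | d
    · exact Or.inl (Or.inl ⟨fun i hi =>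
        absurd (none_mono γ' (Nat.zero_le i) hf0) hi, 0, hf0, by simp⟩)
    · rcases lt_trichotomy d (lam v) with hd | hd | hd
      · exact Or.inl (Or.inr ⟨0, d, lam v, hd, hf0, rfl,
          fun i hi => absurd hi (Nat.not_lt_zero i)⟩)
      · have ht : appendC (tailC γ') (lam v) = γ' := appendC_tailC (by rw [hf0, hd])
        have htl : ∀ β ∈ reach δ s u0, ColexLe (tailC γ') (ofList β) := by
          intro β hβ
          have hmem : β ++ [lam v] ∈ reach δ s v := by
            rw [reach, Set.mem_setOf_eq, mem_deltaStr_concat]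
            exact ⟨u0, hβ, hu0⟩
          have h3 := hγ' _ hmem
          rw [ofList_append_singleton, ← ht] at h3
          exact appendC_le_reflect h3
        have h4 : ColexLe (tailC γ') (infStr (reach δ s u0)) := hglb0.2 _ htl
        rw [← ht]
        exact appendC_le_mono _ h4
      · obtain ⟨β, hβ⟩ := hne u0
        have hmem : β ++ [lam v] ∈ reach δ s v := by
          rw [reach, Set.mem_setOf_eq, mem_deltaStr_concat]
          exact ⟨u0, hβ, hu0⟩
        exfalso
        apply le_of_le_of_lt_false (hγ' _ hmem)
        rw [ofList_append_singleton]
        exact Or.inr ⟨0, lam v, d, hd, rfl, hf0, fun i hi => absurd hi (Nat.not_lt_zero i)⟩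

end Key

end ColexAux

open ColexAux

/-- For every input-consistent DFA whose source `s` has no in-going transitions
and in which every state is reachable from `s`, there is a map `π` choosing an
in-coming predecessor of every non-source state, such that for every `v ≠ s`:
if some iterate `π^k(v)` (`k ≥ 1`) hits `s`, then for the least such `k` the
finite string `λ(π^{k-1}(v)) ⋯ λ(π(v)) λ(v)` is the infimum of `S_v`; and if no
iterate hits `s`, then the left-infinite string whose `i`-th character from the
right is `λ(π^{i-1}(v))` is the infimum of `S_v`. -/
theorem stmt13 {Q A : Type*} [Fintype Q] [Fintype A] [LinearOrder A]
    (δ : Q → A → Set Q) (s : Q)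
    (hdfa : ∀ u a, (δ u a).Subsingleton)
    (hs : ∀ u a, s ∉ δ u a)
    (hreach : ∀ v : Q, ∃ α, v ∈ deltaStr δ s α)
    (lam : Q → A)
    (hlam : ∀ v : Q, v ≠ s →
      (∃ u, v ∈ δ u (lam v)) ∧ ∀ b : A, (∃ u, v ∈ δ u b) → b = lam v) :
    ∃ π : Q → Q,
      (∀ v, v ≠ s → v ∈ δ (π v) (lam v)) ∧
      ∀ v, v ≠ s →
        (∀ k, 1 ≤ k → π^[k] v = s → (∀ j, 1 ≤ j → j < k → π^[j] v ≠ s) →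
          IsColexGLB (reach δ s v)
            (ofList (List.ofFn (fun i : Fin k => lam (π^[k - 1 - (i : ℕ)] v))))) ∧
        ((∀ k, 1 ≤ k → π^[k] v ≠ s) →
          ∃ γ : ColexStr A, (∀ j, γ.f j = some (lam (π^[j] v))) ∧
            IsColexGLB (reach δ s v) γ) := by
  classical
  have hne : ∀ u : Q, (reach δ s u).Nonempty := fun u => hreach u
  have hex : ∀ v : Q, ∃ u : Q, v ≠ s → (v ∈ δ u (lam v) ∧ ∀ u', v ∈ δ u' (lam v) →
      ColexLe (infStr (reach δ s u)) (infStr (reach δ s u'))) := by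
    intro v
    by_cases hv : v = s
    · exact ⟨s, fun h => absurd hv h⟩
    · obtain ⟨u0, hu0, hmin⟩ := exists_min_pred {u | v ∈ δ u (lam v)} (Set.toFinite _)
        ((hlam v hv).1) (fun u => infStr (reach δ s u))
      exact ⟨u0, fun _ => ⟨hu0, fun u' hu' => hmin u' hu'⟩⟩
  choose π hπ using hex
  refine ⟨π, fun v hv => (hπ v hv).1, ?_⟩
  have hKL : ∀ v : Q, v ≠ s → IsColexGLB (reach δ s v)
      (appendC (infStr (reach δ s (π v))) (lam v)) := fun v hv =>
    key_step δ s hreach lam v (π v) hv (hlam v hv).2 (hπ v hv).1 (hπ v hv).2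
  have hEq : ∀ v : Q, v ≠ s →
      infStr (reach δ s v) = appendC (infStr (reach δ s (π v))) (lam v) := fun v hv =>
    glb_unique (infStr_isGLB (hne v)) (hKL v hv)
  intro v hv
  constructor
  · intro k hk hks hleast
    have hchain : ∀ j ≤ k, IsColexGLB (reach δ s (π^[k - j] v))
        (ofList (List.ofFn (fun i : Fin j => lam (π^[k - 1 - (i : ℕ)] v)))) := by
      intro j
      induction j with
      | zero =>
        intro _
        simp only [Nat.sub_zero]
        rw [hks, List.ofFn_zero]
        constructor
        · intro l hl
          have hl0 : l = [] := deltaStr_source_nil δ s hs l s hl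
          subst hl0
          exact Or.inr rfl
        · intro γ' hγ'
          have h0 : [] ∈ reach δ s s := by simp [reach, deltaStr]
          exact hγ' [] h0
      | succ j ih =>
        intro hjk
        have ihj := ih (by omega)
        set u := π^[k - (j + 1)] v with hu
        have huj : π^[k - j] v = π u := by
          rw [hu]
          have h1 : k - j = (k - (j + 1)) + 1 := by omega
          rw [h1, Function.iterate_succ_apply']
        have hus : u ≠ s := by
          rcases Nat.eq_zero_or_pos (k - (j + 1)) with h0 | h0
          · rw [hu, h0]
            simpa using hv
          · exact hleast (k - (j + 1)) (by omega) (by omega)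
        have h5 := hKL u hus
        rw [huj] at ihj
        have h6 : infStr (reach δ s (π u)) =
            ofList (List.ofFn (fun i : Fin j => lam (π^[k - 1 - (i : ℕ)] v))) :=
          glb_unique (infStr_isGLB (hne _)) ihj
        rw [h6, ← ofList_append_singleton] at h5
        have h7 : List.ofFn (fun i : Fin (j + 1) => lam (π^[k - 1 - (i : ℕ)] v)) =
            List.ofFn (fun i : Fin j => lam (π^[k - 1 - (i : ℕ)] v)) ++ [lam u] := by
          rw [List.ofFn_succ', List.concat_eq_append]
          have h8 : k - 1 - ((Fin.last j : Fin (j + 1)) : ℕ) = k - (j + 1) := by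
            simp only [Fin.val_last]
            omega
          rw [h8, hu]
          rfl
        rw [h7]
        exact h5
    have hfin := hchain k le_rfl
    simpa using hfin
  · intro hks
    have hall : ∀ w : Q, w = v → ∀ k, π^[k] w ≠ s := by
      rintro w rfl k
      cases k with
      | zero => simpa using hv
      | succ k => exact hks (k + 1) (by omega)
    have hchar : ∀ j (w : Q), (∀ k, π^[k] w ≠ s) →
        (infStr (reach δ s w)).f j = some (lam (π^[j] w)) := by
      intro j
      induction j with
      | zero =>
        intro w hw
        rw [hEq w (by simpa using hw 0)]
        simp
      | succ j ih =>
        intro w hw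
        rw [hEq w (by simpa using hw 0), appendC_f_succ]
        rw [ih (π w) (fun k => by
          rw [← Function.iterate_succ_apply]
          exact hw (k + 1))]
        rw [← Function.iterate_succ_apply]
    exact ⟨infStr (reach δ s v), fun j => hchar j v (hall v rfl), infStr_isGLB (hne v)⟩
end

section
/- Let A = (Q, δ, s) be an input-consistent DFA whose source has no in-going transitions and in which every state is reachable from s. Then there exists a map π : Q ∖ {s} → Q with v ∈ δ_{λ(v)}(π(v)) for every v ∈ Q ∖ {s}, such that for every v ∈ Q ∖ {s}: if there exists k ≥ 1 with π^k(v) = s (taking the least such k), then sup S_v is the finite string λ(π^{k−1}(v)) ⋯ λ(π(v)) λ(v); and if no iterate π^k(v) equals s, then sup S_v is the left-infinite string whose i-th character from the right end is λ(π^{i−1}(v)) for every i ≥ 1. -/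
set_option linter.unusedSectionVars false


namespace Work

open scoped Classical

variable {A : Type*}

theorem ColexStr.ext' {α β : ColexStr A} (h : ∀ i, α.f i = β.f i) : α = β := by
  cases α; cases β; simp only [ColexStr.mk.injEq]; exact funext h

theorem none_mono {α : ColexStr A} {i j : ℕ} (h : α.f i = none) (hij : i ≤ j) :
    α.f j = none := by
  induction j with
  | zero => obtain rfl : i = 0 := Nat.le_zero.mp hij; exact h
  | succ k ih =>
    rcases Nat.lt_or_ge i (k+1) with hk | hk
    · exact α.init k (ih (by omega))
    · obtain rfl : i = k + 1 := by omega
      exact h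

section Order
variable [LinearOrder A]

def olt (x y : Option A) : Prop :=
  (x = none ∧ y ≠ none) ∨ ∃ a b : A, x = some a ∧ y = some b ∧ a < b

theorem olt_irrefl (x : Option A) : ¬ olt x x := by
  rintro (⟨h1, h2⟩ | ⟨a, b, ha, hb, hab⟩)
  · exact h2 h1
  · rw [ha] at hb
    exact absurd (Option.some_injective _ hb) (ne_of_lt hab)

theorem olt_asymm {x y : Option A} (h : olt x y) (h' : olt y x) : False := by
  rcases h with ⟨h1, h2⟩ | ⟨a, b, ha, hb, hab⟩
  · rcases h' with ⟨g1, g2⟩ | ⟨a, b, ga, gb, gab⟩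
    · exact h2 g1
    · rw [h1] at gb; exact nomatch gb
  · rcases h' with ⟨g1, g2⟩ | ⟨c, d, gc, gd, gcd⟩
    · rw [hb] at g1; exact nomatch g1
    · rw [ha] at gd; rw [hb] at gc
      obtain rfl := Option.some_injective _ gd
      obtain rfl := Option.some_injective _ gc
      exact absurd gcd (not_lt_of_gt hab)

theorem olt_none_some {y : Option A} (h : y ≠ none) : olt none y := Or.inl ⟨rfl, h⟩

def LeN (n : ℕ) (x y : ℕ → Option A) : Prop :=
  (∀ j ≤ n, x j = y j) ∨ ∃ m ≤ n, (∀ j < m, x j = y j) ∧ olt (x m) (y m)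

theorem LeN_of_none {n : ℕ} {x y : ℕ → Option A} (hx : ∀ j ≤ n, x j = none) :
    LeN n x y := by
  by_cases hy : ∀ j ≤ n, y j = none
  · exact Or.inl fun j hj => (hx j hj).trans (hy j hj).symm
  · push_neg at hy
    obtain ⟨j, hj, hyj⟩ := hy
    have hex : ∃ m, m ≤ n ∧ y m ≠ none := ⟨j, hj, hyj⟩
    classical
    let m := Nat.find hex
    obtain ⟨hm, hym⟩ := Nat.find_spec hex
    refine Or.inr ⟨m, hm, fun i hi => ?_, ?_⟩
    · have : ¬ (i ≤ n ∧ y i ≠ none) := Nat.find_min hex hi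
      push_neg at this
      have := this (le_trans (le_of_lt hi) hm)
      rw [hx i (le_trans (le_of_lt hi) hm), this]
    · rw [hx m hm]; exact olt_none_some hym

theorem LeN_sandwich {n : ℕ} {x y z : ℕ → Option A} (hxy : LeN n x y) (hyz : LeN n y z)
    (hxz : ∀ j ≤ n, x j = z j) : ∀ j ≤ n, y j = x j := by
  rcases hxy with h | ⟨m, hm, hagm, holt⟩
  · exact fun j hj => (h j hj).symm
  · exfalso
    rcases hyz with h' | ⟨m', hm', hagm', holt'⟩
    · rw [h' m hm, ← hxz m hm] at holt
      exact olt_irrefl _ holt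
    · rcases lt_trichotomy m m' with hlt | rfl | hlt
      · rw [hagm' m hlt, ← hxz m hm] at holt
        exact olt_irrefl _ holt
      · rw [← hxz m hm] at holt'
        exact olt_asymm holt holt'
      · rw [← hagm m' hlt, hxz m' (le_trans (le_of_lt hlt) hm)] at holt'
        exact olt_irrefl _ holt'

theorem LeN_cons {n : ℕ} {x y x' y' : ℕ → Option A}
    (h0 : x' 0 = y' 0) (hx : ∀ j, x' (j + 1) = x j) (hy : ∀ j, y' (j + 1) = y j)
    (h : LeN n x y) : LeN (n + 1) x' y' := by
  rcases h with h | ⟨m, hm, hag, holt⟩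
  · left
    intro j hj
    cases j with
    | zero => exact h0
    | succ i => rw [hx i, hy i, h i (by omega)]
  · refine Or.inr ⟨m + 1, by omega, fun j hj => ?_, by rw [hx m, hy m]; exact holt⟩
    cases j with
    | zero => exact h0
    | succ i => rw [hx i, hy i, hag i (by omega)]

theorem colexLe_of_none {α β : ColexStr A} (hx : ∀ j, α.f j = none) : ColexLe α β := by
  by_cases hy : ∀ j, β.f j = none
  · exact Or.inr (ColexStr.ext' fun i => (hx i).trans (hy i).symm)
  · push_neg at hy
    obtain ⟨j, hj⟩ := hy
    exact Or.inl (Or.inl ⟨fun i hi => absurd (hx i) hi, j, hx j, hj⟩)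

theorem colexLe_cons {x y x' y' : ColexStr A} {a : A}
    (hx0 : x'.f 0 = some a) (hy0 : y'.f 0 = some a)
    (hx : ∀ j, x'.f (j + 1) = x.f j) (hy : ∀ j, y'.f (j + 1) = y.f j)
    (h : ColexLe x y) : ColexLe x' y' := by
  rcases h with (⟨h1, i, hxi, hyi⟩ | ⟨n, c, d, hcd, hxn, hyn, hag⟩) | heq
  · refine Or.inl (Or.inl ⟨fun i hi => ?_, i + 1, by rw [hx]; exact hxi, by rw [hy]; exact hyi⟩)
    cases i with
    | zero => rw [hx0, hy0]
    | succ m =>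
      rw [hx] at hi ⊢
      rw [hy]
      exact h1 m hi
  · refine Or.inl (Or.inr ⟨n + 1, c, d, hcd, by rw [hx]; exact hxn, by rw [hy]; exact hyn,
      fun i hi => ?_⟩)
    cases i with
    | zero => rw [hx0, hy0]
    | succ m =>
      rw [hx, hy]
      exact hag m (by omega)
  · refine Or.inr (ColexStr.ext' fun i => ?_)
    cases i with
    | zero => rw [hx0, hy0]
    | succ m => rw [hx, hy, heq]

theorem colexLe_total (α β : ColexStr A) : ColexLe α β ∨ ColexLt β α := by
  by_cases h : ∀ j, α.f j = β.f j
  · exact Or.inl (Or.inr (ColexStr.ext' h))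
  · push_neg at h
    classical
    let n := Nat.find h
    have hn : α.f n ≠ β.f n := Nat.find_spec h
    have hag : ∀ i < n, α.f i = β.f i := fun i hi => by
      have := Nat.find_min h hi; push_neg at this; exact this
    rcases hα : α.f n with _ | a <;> rcases hβ : β.f n with _ | b
    · rw [hα, hβ] at hn; exact absurd rfl hn
    · refine Or.inl (Or.inl (Or.inl ⟨fun i hi => ?_, n, hα, by rw [hβ]; simp⟩))
      rcases Nat.lt_or_ge i n with hin | hin
      · exact (hag i hin).symm
      · exact absurd (none_mono hα hin) hi
    · refine Or.inr (Or.inl ⟨fun i hi => ?_, n, hβ, by rw [hα]; simp⟩)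
      rcases Nat.lt_or_ge i n with hin | hin
      · exact hag i hin
      · exact absurd (none_mono hβ hin) hi
    · rcases lt_trichotomy a b with hab | rfl | hab
      · exact Or.inl (Or.inl (Or.inr ⟨n, a, b, hab, hα, hβ, hag⟩))
      · rw [hα, hβ] at hn; exact absurd rfl hn
      · exact Or.inr (Or.inr ⟨n, b, a, hab, hβ, hα, fun i hi => (hag i hi).symm⟩)

end Order
section Automaton

variable {Q : Type*} [Fintype Q] [LinearOrder A]
variable (δ : Q → A → Set Q) (s : Q) (lam : Q → A)

noncomputable def predF (v : Q) : Finset Q :=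
  Finset.univ.filter fun u => v ∈ δ u (lam v)

theorem mem_predF {v u : Q} : u ∈ predF δ lam v ↔ v ∈ δ u (lam v) := by
  simp [predF]

/-- the maximizers of `lam` on `U.erase s` -/
noncomputable def maxSet (U : Finset Q) : Finset Q :=
  (U.erase s).filter fun u => ∀ w ∈ U.erase s, lam w ≤ lam u

theorem mem_maxSet {U : Finset Q} {u : Q} :
    u ∈ maxSet s lam U ↔ u ∈ U.erase s ∧ ∀ w ∈ U.erase s, lam w ≤ lam u := by
  simp [maxSet]

theorem maxSet_nonempty {U : Finset Q} (h : (U.erase s).Nonempty) :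
    ∃ u, u ∈ maxSet s lam U := by
  obtain ⟨u, hu, hmax⟩ := Finset.exists_max_image (U.erase s) lam h
  exact ⟨u, (mem_maxSet s lam).mpr ⟨hu, hmax⟩⟩

noncomputable def nextSet (U : Finset Q) : Finset Q :=
  (maxSet s lam U).biUnion (predF δ lam)

theorem mem_nextSet {U : Finset Q} {w : Q} :
    w ∈ nextSet δ s lam U ↔ ∃ u ∈ maxSet s lam U, u ∈ δ w (lam u) := by
  simp [nextSet, mem_predF]

noncomputable def charF (U : Finset Q) : Option A :=
  if h : (U.erase s).Nonempty then some (((U.erase s).image lam).max' (h.image lam)) else none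

theorem charF_eq_lam {U : Finset Q} {u : Q} (hu : u ∈ maxSet s lam U) :
    charF s lam U = some (lam u) := by
  rw [mem_maxSet] at hu
  have hne : (U.erase s).Nonempty := ⟨u, hu.1⟩
  rw [charF, dif_pos hne]
  congr 1
  apply le_antisymm
  · apply Finset.max'_le
    intro b hb
    obtain ⟨w, hw, rfl⟩ := Finset.mem_image.mp hb
    exact hu.2 w hw
  · exact Finset.le_max' _ _ (Finset.mem_image_of_mem lam hu.1)

theorem charF_eq_none {U : Finset Q} (h : U.erase s = ∅) : charF s lam U = none := by
  rw [charF, dif_neg (by simp [h])]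

noncomputable def charsF : ℕ → Finset Q → Option A
  | 0, U => charF s lam U
  | n + 1, U => charsF n (nextSet δ s lam U)

theorem charsF_zero (U : Finset Q) : charsF δ s lam 0 U = charF s lam U := rfl

theorem charsF_succ (n : ℕ) (U : Finset Q) :
    charsF δ s lam (n + 1) U = charsF δ s lam n (nextSet δ s lam U) := rfl

theorem charsF_none_of_erase_empty : ∀ (n : ℕ) (U : Finset Q), U.erase s = ∅ →
    charsF δ s lam n U = none := by
  intro n
  induction n with
  | zero => exact fun U h => charF_eq_none s lam h
  | succ k ih =>
    intro U h
    rw [charsF_succ]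
    apply ih
    have : nextSet δ s lam U = ∅ := by
      rw [Finset.eq_empty_iff_forall_notMem]
      intro w hw
      obtain ⟨u, hu, _⟩ := (mem_nextSet δ s lam).mp hw
      rw [mem_maxSet] at hu
      rw [h] at hu
      exact absurd hu.1 (Finset.notMem_empty u)
    rw [this]
    simp [Finset.erase_empty]

theorem charsF_init : ∀ (n : ℕ) (U : Finset Q), charsF δ s lam n U = none →
    charsF δ s lam (n + 1) U = none := by
  intro n
  induction n with
  | zero =>
    intro U h
    rw [charsF_zero] at h
    have : U.erase s = ∅ := by
      by_contra hne
      rw [charF, dif_pos (Finset.nonempty_of_ne_empty hne)] at h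
      exact nomatch h
    exact charsF_none_of_erase_empty δ s lam 1 U this
  | succ k ih =>
    intro U h
    rw [charsF_succ] at h ⊢
    exact ih _ h

theorem charsF_none_mono {n m : ℕ} {U : Finset Q} (h : charsF δ s lam n U = none)
    (hnm : n ≤ m) : charsF δ s lam m U = none := by
  induction m with
  | zero => obtain rfl : n = 0 := Nat.le_zero.mp hnm; exact h
  | succ k ih =>
    rcases Nat.lt_or_ge n (k + 1) with hk | hk
    · exact charsF_init δ s lam k U (ih (by omega))
    · obtain rfl : n = k + 1 := by omega
      exact h

theorem erase_singleton_of_ne {u : Q} (hu : u ≠ s) : ({u} : Finset Q).erase s = {u} := by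
  apply Finset.erase_eq_of_notMem
  simp [Ne.symm hu]

theorem maxSet_singleton {u : Q} (hu : u ≠ s) : maxSet s lam ({u} : Finset Q) = {u} := by
  rw [maxSet, erase_singleton_of_ne s hu]
  apply Finset.filter_true_of_mem
  intro x hx w hw
  rw [Finset.mem_singleton] at hx hw
  rw [hx, hw]

theorem nextSet_singleton {u : Q} (hu : u ≠ s) :
    nextSet δ s lam ({u} : Finset Q) = predF δ lam u := by
  rw [nextSet, maxSet_singleton s lam hu, Finset.singleton_biUnion]

theorem charF_singleton {u : Q} (hu : u ≠ s) : charF s lam ({u} : Finset Q) = some (lam u) := by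
  apply charF_eq_lam
  rw [maxSet_singleton s lam hu]
  exact Finset.mem_singleton_self u

theorem charsF_s (n : ℕ) : charsF δ s lam n ({s} : Finset Q) = none :=
  charsF_none_of_erase_empty δ s lam n {s} (Finset.erase_singleton s)

theorem charsF_mono : ∀ (n : ℕ) (U V : Finset Q), U ⊆ V →
    LeN n (fun j => charsF δ s lam j U) (fun j => charsF δ s lam j V) := by
  intro n
  induction n with
  | zero =>
    intro U V hUV
    rcases Finset.eq_empty_or_nonempty (U.erase s) with he | hne
    · exact LeN_of_none fun j _ => charsF_none_of_erase_empty δ s lam j U he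
    · obtain ⟨u, hu⟩ := maxSet_nonempty s lam hne
      have hV : (V.erase s).Nonempty := hne.mono (Finset.erase_subset_erase s hUV)
      obtain ⟨u', hu'⟩ := maxSet_nonempty s lam hV
      have hle : lam u ≤ lam u' := ((mem_maxSet s lam).mp hu').2 u
        (Finset.erase_subset_erase s hUV ((mem_maxSet s lam).mp hu).1)
      have hcU : charsF δ s lam 0 U = some (lam u) := charF_eq_lam s lam hu
      have hcV : charsF δ s lam 0 V = some (lam u') := charF_eq_lam s lam hu'
      rcases lt_or_eq_of_le hle with hlt | heq
      · exact Or.inr ⟨0, le_refl 0, fun j hj => absurd hj (Nat.not_lt_zero j),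
          Or.inr ⟨lam u, lam u', hcU, hcV, hlt⟩⟩
      · refine Or.inl fun j hj => ?_
        obtain rfl : j = 0 := Nat.le_zero.mp hj
        show charsF δ s lam 0 U = charsF δ s lam 0 V
        rw [hcU, hcV, heq]
  | succ k ih =>
    intro U V hUV
    rcases Finset.eq_empty_or_nonempty (U.erase s) with he | hne
    · exact LeN_of_none fun j _ => charsF_none_of_erase_empty δ s lam j U he
    · obtain ⟨u, hu⟩ := maxSet_nonempty s lam hne
      have hV : (V.erase s).Nonempty := hne.mono (Finset.erase_subset_erase s hUV)
      obtain ⟨u', hu'⟩ := maxSet_nonempty s lam hV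
      have hle : lam u ≤ lam u' := ((mem_maxSet s lam).mp hu').2 u
        (Finset.erase_subset_erase s hUV ((mem_maxSet s lam).mp hu).1)
      have hcU : charsF δ s lam 0 U = some (lam u) := charF_eq_lam s lam hu
      have hcV : charsF δ s lam 0 V = some (lam u') := charF_eq_lam s lam hu'
      rcases lt_or_eq_of_le hle with hlt | heq
      · exact Or.inr ⟨0, by omega, fun j hj => absurd hj (Nat.not_lt_zero j),
          Or.inr ⟨lam u, lam u', hcU, hcV, hlt⟩⟩
      · have hM : maxSet s lam U ⊆ maxSet s lam V := by
          intro w hw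
          rw [mem_maxSet] at hw ⊢
          refine ⟨Finset.erase_subset_erase s hUV hw.1, fun x hx => ?_⟩
          calc lam x ≤ lam u' := ((mem_maxSet s lam).mp hu').2 x hx
            _ = lam u := heq.symm
            _ ≤ lam w := hw.2 u ((mem_maxSet s lam).mp hu).1
        have hN : nextSet δ s lam U ⊆ nextSet δ s lam V :=
          Finset.biUnion_subset_biUnion_of_subset_left (predF δ lam) hM
        have hIH := ih (nextSet δ s lam U) (nextSet δ s lam V) hN
        refine LeN_cons ?_ (fun j => charsF_succ δ s lam j U)
          (fun j => charsF_succ δ s lam j V) hIH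
        show charsF δ s lam 0 U = charsF δ s lam 0 V
        rw [hcU, hcV, heq]

theorem exists_singleton_agree (hlamex : ∀ v : Q, v ≠ s → ∃ u, v ∈ δ u (lam v)) :
    ∀ (n : ℕ) (U : Finset Q), U.Nonempty →
      ∃ u ∈ U, ∀ j ≤ n, charsF δ s lam j ({u} : Finset Q) = charsF δ s lam j U := by
  have hsU : ∀ U : Finset Q, U.Nonempty → U.erase s = ∅ → s ∈ U := by
    intro U hU he
    obtain ⟨x, hx⟩ := hU
    by_cases hxs : x = s
    · exact hxs ▸ hx
    · exact absurd (Finset.mem_erase.mpr ⟨hxs, hx⟩) (by simp [he])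
  intro n
  induction n with
  | zero =>
    intro U hU
    rcases Finset.eq_empty_or_nonempty (U.erase s) with he | hne
    · refine ⟨s, hsU U hU he, fun j _ => ?_⟩
      rw [charsF_s, charsF_none_of_erase_empty δ s lam j U he]
    · obtain ⟨u, hu⟩ := maxSet_nonempty s lam hne
      have hu1 := (mem_maxSet s lam).mp hu
      have hus : u ≠ s := (Finset.mem_erase.mp hu1.1).1
      refine ⟨u, Finset.mem_of_mem_erase hu1.1, fun j hj => ?_⟩
      obtain rfl : j = 0 := Nat.le_zero.mp hj
      rw [charsF_zero, charsF_zero, charF_singleton s lam hus, charF_eq_lam s lam hu]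
  | succ k ih =>
    intro U hU
    rcases Finset.eq_empty_or_nonempty (U.erase s) with he | hne
    · refine ⟨s, hsU U hU he, fun j _ => ?_⟩
      rw [charsF_s, charsF_none_of_erase_empty δ s lam j U he]
    · have hnne : (nextSet δ s lam U).Nonempty := by
        obtain ⟨u, hu⟩ := maxSet_nonempty s lam hne
        have hus : u ≠ s := (Finset.mem_erase.mp ((mem_maxSet s lam).mp hu).1).1
        obtain ⟨w, hw⟩ := hlamex u hus
        exact ⟨w, (mem_nextSet δ s lam).mpr ⟨u, hu, hw⟩⟩
      obtain ⟨w, hwU', hwchars⟩ := ih (nextSet δ s lam U) hnne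
      obtain ⟨u, hu, huw⟩ := (mem_nextSet δ s lam).mp hwU'
      have hus : u ≠ s := (Finset.mem_erase.mp ((mem_maxSet s lam).mp hu).1).1
      have hwp : ({w} : Finset Q) ⊆ predF δ lam u :=
        Finset.singleton_subset_iff.mpr ((mem_predF δ lam).mpr huw)
      have hpU' : predF δ lam u ⊆ nextSet δ s lam U := by
        intro x hx
        exact (mem_nextSet δ s lam).mpr ⟨u, hu, (mem_predF δ lam).mp hx⟩
      have h1 := charsF_mono δ s lam k _ _ hwp
      have h2 := charsF_mono δ s lam k _ _ hpU'
      have hmid := LeN_sandwich h1 h2 (fun j hj => hwchars j hj)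
      refine ⟨u, Finset.mem_of_mem_erase ((mem_maxSet s lam).mp hu).1, fun j hj => ?_⟩
      cases j with
      | zero => rw [charsF_zero, charsF_zero, charF_singleton s lam hus, charF_eq_lam s lam hu]
      | succ i =>
        rw [charsF_succ, charsF_succ, nextSet_singleton δ s lam hus,
          hmid i (by omega), hwchars i (by omega)]

theorem exists_pi (hlamex : ∀ v : Q, v ≠ s → ∃ u, v ∈ δ u (lam v)) (v : Q) (hv : v ≠ s) :
    ∃ w, v ∈ δ w (lam v) ∧ ∀ j, charsF δ s lam j ({w} : Finset Q) =
      charsF δ s lam j (predF δ lam v) := by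
  classical
  have hPne : (predF δ lam v).Nonempty := by
    obtain ⟨u, hu⟩ := hlamex v hv
    exact ⟨u, (mem_predF δ lam).mpr hu⟩
  have hall : ∀ n : ℕ, ∃ u ∈ predF δ lam v,
      ∀ j ≤ n, charsF δ s lam j {u} = charsF δ s lam j (predF δ lam v) :=
    fun n => exists_singleton_agree δ s lam hlamex n _ hPne
  choose f hf1 hf2 using hall
  obtain ⟨w, hw⟩ := Finite.exists_infinite_fiber f
  rw [Set.infinite_coe_iff] at hw
  obtain ⟨n0, hn0⟩ := hw.nonempty
  have hn0' : f n0 = w := hn0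
  have hwP : w ∈ predF δ lam v := hn0' ▸ hf1 n0
  refine ⟨w, (mem_predF δ lam).mp hwP, fun j => ?_⟩
  obtain ⟨n, hn, hjn⟩ := hw.exists_gt j
  have hn' : f n = w := hn
  have := hf2 n j (le_of_lt hjn)
  rwa [hn'] at this

theorem deltaStr_append {Q' A' : Type*} (δ : Q' → A' → Set Q') (a : A') :
    ∀ (l : List A') (w v : Q'), v ∈ deltaStr δ w (l ++ [a]) ↔
      ∃ u ∈ deltaStr δ w l, v ∈ δ u a := by
  intro l
  induction l with
  | nil =>
    intro w v
    show v ∈ ⋃ x ∈ δ w a, deltaStr δ x [] ↔ ∃ u ∈ ({w} : Set Q'), v ∈ δ u a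
    simp [deltaStr]
  | cons b t ih =>
    intro w v
    show v ∈ ⋃ x ∈ δ w b, deltaStr δ x (t ++ [a]) ↔
      ∃ u ∈ ⋃ x ∈ δ w b, deltaStr δ x t, v ∈ δ u a
    simp only [Set.mem_iUnion, exists_prop]
    constructor
    · rintro ⟨x, hx, hv⟩
      obtain ⟨u, hu, hua⟩ := (ih x v).mp hv
      exact ⟨u, ⟨x, hx, hu⟩, hua⟩
    · rintro ⟨u, ⟨x, hx, hu⟩, hua⟩
      exact ⟨x, hx, (ih x v).mpr ⟨u, hu, hua⟩⟩

theorem ofList_f_lt {l : List A} {j : ℕ} (h : j < l.length) :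
    (ofList l).f j = some (l[l.length - 1 - j]'(by omega)) := dif_pos h

theorem ofList_f_ge {l : List A} {j : ℕ} (h : l.length ≤ j) : (ofList l).f j = none :=
  dif_neg (by omega)

theorem ofList_append_zero (l : List A) (a : A) : (ofList (l ++ [a])).f 0 = some a := by
  rw [ofList_f_lt (by simp)]
  congr 1
  have h1 : (l ++ [a]).length - 1 - 0 = l.length := by simp
  simp [h1]

theorem ofList_append_succ (l : List A) (a : A) (j : ℕ) :
    (ofList (l ++ [a])).f (j + 1) = (ofList l).f j := by
  by_cases h : j < l.length
  · rw [ofList_f_lt (by simp; omega), ofList_f_lt h]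
    congr 1
    have h1 : (l ++ [a]).length - 1 - (j + 1) = l.length - 1 - j := by simp; omega
    have h2 : (l ++ [a]).length - 1 - (j + 1) < l.length := by simp; omega
    rw [List.getElem_append_left h2]
    congr 1
  · rw [ofList_f_ge (by simp; omega), ofList_f_ge (by omega)]

noncomputable def Gamma (U : Finset Q) : ColexStr A :=
  ⟨fun j => charsF δ s lam j U, fun i hi => charsF_init δ s lam i U hi⟩

theorem Gamma_zero (U : Finset Q) : (Gamma δ s lam U).f 0 = charF s lam U := rfl

theorem Gamma_succ (U : Finset Q) (j : ℕ) :
    (Gamma δ s lam U).f (j + 1) = (Gamma δ s lam (nextSet δ s lam U)).f j := rfl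

theorem upper_bound (hs : ∀ u a, s ∉ δ u a)
    (hlam2 : ∀ v : Q, v ≠ s → ∀ b : A, (∃ u, v ∈ δ u b) → b = lam v) :
    ∀ (l : List A) (U : Finset Q) (v : Q), v ∈ U → v ∈ deltaStr δ s l →
      ColexLe (ofList l) (Gamma δ s lam U) := by
  intro l
  induction l using List.reverseRecOn with
  | nil =>
    intro U v hvU hvl
    exact colexLe_of_none fun j => ofList_f_ge (by simp)
  | append_singleton t a ih =>
    intro U v hvU hvl
    obtain ⟨u, hu, hua⟩ := (deltaStr_append δ a t s v).mp hvl
    have hvs : v ≠ s := fun h => hs u a (h ▸ hua)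
    obtain rfl : a = lam v := hlam2 v hvs a ⟨u, hua⟩
    have hve : v ∈ U.erase s := Finset.mem_erase.mpr ⟨hvs, hvU⟩
    obtain ⟨m, hm⟩ := maxSet_nonempty s lam ⟨v, hve⟩
    have hm' := (mem_maxSet s lam).mp hm
    have hle : lam v ≤ lam m := hm'.2 v hve
    have hG0 : (Gamma δ s lam U).f 0 = some (lam m) := by
      rw [Gamma_zero, charF_eq_lam s lam hm]
    rcases lt_or_eq_of_le hle with hlt | heq
    · exact Or.inl (Or.inr ⟨0, lam v, lam m, hlt, ofList_append_zero t (lam v), hG0,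
        fun i hi => absurd hi (Nat.not_lt_zero i)⟩)
    · have hvM : v ∈ maxSet s lam U :=
        (mem_maxSet s lam).mpr ⟨hve, fun w hw => le_of_le_of_eq (hm'.2 w hw) heq.symm⟩
      have huN : u ∈ nextSet δ s lam U := (mem_nextSet δ s lam).mpr ⟨v, hvM, hua⟩
      have ihh := ih (nextSet δ s lam U) u huN hu
      refine colexLe_cons (a := lam v) (ofList_append_zero t (lam v)) (by rw [hG0, heq])
        (ofList_append_succ t (lam v)) (fun j => Gamma_succ δ s lam U j) ihh

theorem realize (hreach : ∀ v : Q, ∃ l, v ∈ deltaStr δ s l)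
    (hlamex : ∀ v : Q, v ≠ s → ∃ u, v ∈ δ u (lam v)) :
    ∀ (n : ℕ) (U : Finset Q), charsF δ s lam n U ≠ none →
      ∃ v ∈ U, ∃ l : List A, v ∈ deltaStr δ s l ∧ n < l.length ∧
        ∀ i ≤ n, (ofList l).f i = charsF δ s lam i U := by
  intro n
  induction n with
  | zero =>
    intro U hne
    have herase : (U.erase s).Nonempty := by
      by_contra h
      exact hne (charsF_none_of_erase_empty δ s lam 0 U (Finset.not_nonempty_iff_eq_empty.mp h))
    obtain ⟨u, hu⟩ := maxSet_nonempty s lam herase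
    have hu' := (mem_maxSet s lam).mp hu
    have hus : u ≠ s := (Finset.mem_erase.mp hu'.1).1
    obtain ⟨w, hw⟩ := hlamex u hus
    obtain ⟨t, ht⟩ := hreach w
    refine ⟨u, Finset.mem_of_mem_erase hu'.1, t ++ [lam u],
      (deltaStr_append δ _ t s u).mpr ⟨w, ht, hw⟩, by simp, fun i hi => ?_⟩
    obtain rfl : i = 0 := Nat.le_zero.mp hi
    rw [ofList_append_zero, charsF_zero, charF_eq_lam s lam hu]
  | succ k ih =>
    intro U hne
    have herase : (U.erase s).Nonempty := by
      by_contra h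
      exact hne (charsF_none_of_erase_empty δ s lam (k + 1) U
        (Finset.not_nonempty_iff_eq_empty.mp h))
    rw [charsF_succ] at hne
    obtain ⟨v', hv'U, l', hl', hlen, hmatch⟩ := ih (nextSet δ s lam U) hne
    obtain ⟨u, hu, huv'⟩ := (mem_nextSet δ s lam).mp hv'U
    have hus : u ≠ s := (Finset.mem_erase.mp ((mem_maxSet s lam).mp hu).1).1
    refine ⟨u, Finset.mem_of_mem_erase ((mem_maxSet s lam).mp hu).1, l' ++ [lam u],
      (deltaStr_append δ _ l' s u).mpr ⟨v', hl', huv'⟩, by simp; omega, fun i hi => ?_⟩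
    cases i with
    | zero => rw [ofList_append_zero, charsF_zero, charF_eq_lam s lam hu]
    | succ i =>
      rw [ofList_append_succ, charsF_succ]
      exact hmatch i (by omega)

theorem chars_iter {π : Q → Q}
    (hπc : ∀ v : Q, v ≠ s → ∀ j, charsF δ s lam j ({π v} : Finset Q) =
      charsF δ s lam j (predF δ lam v)) :
    ∀ (j : ℕ) (v : Q), (∀ i < j, π^[i] v ≠ s) →
      charsF δ s lam j ({v} : Finset Q) = charsF δ s lam 0 ({π^[j] v} : Finset Q) := by
  intro j
  induction j with
  | zero => intro v _; rfl
  | succ k ihj =>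
    intro v hv
    have hvs : v ≠ s := by simpa using hv 0 (Nat.succ_pos k)
    rw [charsF_succ, nextSet_singleton δ s lam hvs, ← hπc v hvs k]
    rw [ihj (π v) (fun i hi => by
      rw [← Function.iterate_succ_apply]
      exact hv (i + 1) (by omega))]
    rw [Function.iterate_succ_apply]

theorem path_reach {π : Q → Q} (hπ : ∀ v : Q, v ≠ s → v ∈ δ (π v) (lam v)) :
    ∀ (k : ℕ) (v : Q), (∀ i < k, π^[i] v ≠ s) →
      v ∈ deltaStr δ (π^[k] v) (List.ofFn fun i : Fin k => lam (π^[k - 1 - (i : ℕ)] v)) := by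
  intro k
  induction k with
  | zero =>
    intro v _
    show v ∈ ({v} : Set Q)
    exact rfl
  | succ k ihk =>
    intro v hv
    have hlist : (List.ofFn fun i : Fin (k + 1) => lam (π^[k + 1 - 1 - (i : ℕ)] v)) =
        lam (π^[k] v) :: List.ofFn fun i : Fin k => lam (π^[k - 1 - (i : ℕ)] v) := by
      rw [List.ofFn_succ]
      congr 1
      apply congrArg
      funext i
      simp only [Fin.val_succ]
      have h1 : k + 1 - 1 - ((i : ℕ) + 1) = k - 1 - (i : ℕ) := by omega
      rw [h1]
    rw [hlist]
    have hx : π^[k] v ∈ δ (π^[k + 1] v) (lam (π^[k] v)) := by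
      rw [Function.iterate_succ_apply']
      exact hπ (π^[k] v) (hv k (Nat.lt_succ_self k))
    exact Set.mem_biUnion hx (ihk v fun i hi => hv i (by omega))

end Automaton
end Work

/-- For every input-consistent DFA whose source `s` has no in-going transitions
and in which every state is reachable from `s`, there is a map `π` choosing an
in-coming predecessor of every non-source state, such that for every `v ≠ s`:
if some iterate `π^k(v)` (`k ≥ 1`) hits `s`, then for the least such `k` the
finite string `λ(π^{k-1}(v)) ⋯ λ(π(v)) λ(v)` is the supremum of `S_v`; and if
no iterate hits `s`, then the left-infinite string whose `i`-th character from
the right is `λ(π^{i-1}(v))` is the supremum of `S_v`. -/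
theorem stmt14 {Q A : Type*} [Fintype Q] [Fintype A] [LinearOrder A]
    (δ : Q → A → Set Q) (s : Q)
    (hdfa : ∀ u a, (δ u a).Subsingleton)
    (hs : ∀ u a, s ∉ δ u a)
    (hreach : ∀ v : Q, ∃ α, v ∈ deltaStr δ s α)
    (lam : Q → A)
    (hlam : ∀ v : Q, v ≠ s →
      (∃ u, v ∈ δ u (lam v)) ∧ ∀ b : A, (∃ u, v ∈ δ u b) → b = lam v) :
    ∃ π : Q → Q,
      (∀ v, v ≠ s → v ∈ δ (π v) (lam v)) ∧
      ∀ v, v ≠ s →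
        (∀ k, 1 ≤ k → π^[k] v = s → (∀ j, 1 ≤ j → j < k → π^[j] v ≠ s) →
          IsColexLUB (reach δ s v)
            (ofList (List.ofFn (fun i : Fin k => lam (π^[k - 1 - (i : ℕ)] v))))) ∧
        ((∀ k, 1 ≤ k → π^[k] v ≠ s) →
          ∃ γ : ColexStr A, (∀ j, γ.f j = some (lam (π^[j] v))) ∧
            IsColexLUB (reach δ s v) γ) := by
  classical
  have hlamex : ∀ v : Q, v ≠ s → ∃ u, v ∈ δ u (lam v) := fun v hv => (hlam v hv).1
  have hlam2 : ∀ v : Q, v ≠ s → ∀ b : A, (∃ u, v ∈ δ u b) → b = lam v :=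
    fun v hv => (hlam v hv).2
  have hch : ∀ v : Q, ∃ w, v ≠ s → (v ∈ δ w (lam v) ∧ ∀ j,
      Work.charsF δ s lam j ({w} : Finset Q) = Work.charsF δ s lam j (Work.predF δ lam v)) := by
    intro v
    by_cases hv : v = s
    · exact ⟨s, fun h => absurd hv h⟩
    · obtain ⟨w, hw1, hw2⟩ := Work.exists_pi δ s lam hlamex v hv
      exact ⟨w, fun _ => ⟨hw1, hw2⟩⟩
  choose π hπ using hch
  have hπ1 : ∀ v, v ≠ s → v ∈ δ (π v) (lam v) := fun v hv => (hπ v hv).1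
  have hπc : ∀ v, v ≠ s → ∀ j, Work.charsF δ s lam j ({π v} : Finset Q) =
      Work.charsF δ s lam j (Work.predF δ lam v) := fun v hv => (hπ v hv).2
  refine ⟨π, hπ1, fun v hv => ⟨?_, ?_⟩⟩
  · -- finite case
    intro k hk1 hks hkmin
    have hiter : ∀ i < k, π^[i] v ≠ s := by
      intro i hi
      cases i with
      | zero => simpa using hv
      | succ m => exact hkmin (m + 1) (by omega) hi
    have hGf : ∀ j, (ofList (List.ofFn fun i : Fin k => lam (π^[k - 1 - (i : ℕ)] v))).f j
        = Work.charsF δ s lam j ({v} : Finset Q) := by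
      intro j
      rcases Nat.lt_or_ge j k with hj | hj
      · have hlen : j < (List.ofFn fun i : Fin k => lam (π^[k - 1 - (i : ℕ)] v)).length := by
          simp [hj]
        rw [Work.ofList_f_lt hlen,
          Work.chars_iter δ s lam hπc j v (fun i hi => hiter i (by omega)),
          Work.charsF_zero, Work.charF_singleton s lam (hiter j hj)]
        simp only [List.getElem_ofFn, List.length_ofFn]
        have h2 : k - 1 - (k - 1 - j) = j := by omega
        rw [h2]
      · have hlen : (List.ofFn fun i : Fin k => lam (π^[k - 1 - (i : ℕ)] v)).length ≤ j := by
          simp [hj]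
        rw [Work.ofList_f_ge hlen]
        have hk0 : Work.charsF δ s lam k ({v} : Finset Q) = none := by
          rw [Work.chars_iter δ s lam hπc k v hiter, hks]
          exact Work.charsF_s δ s lam 0
        exact (Work.charsF_none_mono δ s lam hk0 hj).symm
    have hGe : Work.Gamma δ s lam ({v} : Finset Q) =
        ofList (List.ofFn fun i : Fin k => lam (π^[k - 1 - (i : ℕ)] v)) :=
      Work.ColexStr.ext' fun i => (hGf i).symm
    constructor
    · intro l hl
      have hub := Work.upper_bound δ s lam hs hlam2 l {v} v (Finset.mem_singleton_self v) hl
      rwa [hGe] at hub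
    · intro γ' hγ'
      apply hγ'
      have hpath := Work.path_reach δ s lam hπ1 k v hiter
      rw [hks] at hpath
      exact hpath
  · -- infinite case
    intro hinf
    have hiter : ∀ i, π^[i] v ≠ s := by
      intro i
      cases i with
      | zero => simpa using hv
      | succ m => exact hinf (m + 1) (by omega)
    refine ⟨Work.Gamma δ s lam ({v} : Finset Q), ?_, ?_, ?_⟩
    · intro j
      show Work.charsF δ s lam j ({v} : Finset Q) = _
      rw [Work.chars_iter δ s lam hπc j v (fun i _ => hiter i), Work.charsF_zero,
        Work.charF_singleton s lam (hiter j)]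
    · intro l hl
      exact Work.upper_bound δ s lam hs hlam2 l {v} v (Finset.mem_singleton_self v) hl
    · intro γ' hγ'
      set Γ := Work.Gamma δ s lam ({v} : Finset Q) with hΓdef
      have hΓc : ∀ i, Γ.f i = Work.charsF δ s lam i ({v} : Finset Q) := fun i => rfl
      have hΓsome : ∀ i, Γ.f i = some (lam (π^[i] v)) := by
        intro i
        rw [hΓc i, Work.chars_iter δ s lam hπc i v (fun m _ => hiter m), Work.charsF_zero,
          Work.charF_singleton s lam (hiter i)]
      rcases Work.colexLe_total Γ γ' with h | hlt
      · exact h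
      · exfalso
        rcases hlt with ⟨hagree, i, hγ'i, hΓi⟩ | ⟨n, a, b, hab, hγ'n, hΓn, hag⟩
        · -- γ' is a proper suffix of Γ : contradiction
          obtain ⟨v0, hv0, l, hlreach, hlen, hmatch⟩ :=
            Work.realize δ s lam hreach hlamex i {v} (by rw [← hΓc i]; exact hΓi)
          obtain rfl : v0 = v := Finset.mem_singleton.mp hv0
          have hub := hγ' l hlreach
          rcases hub with (⟨h1, _⟩ | ⟨m, c, d, hcd, hαm, hγ'm, hagm⟩) | heq
          · have hαi : (ofList l).f i ≠ none := by
              rw [hmatch i le_rfl, ← hΓc i]; exact hΓi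
            exact hαi ((h1 i hαi).symm.trans hγ'i)
          · have hmi : m < i := by
              by_contra hge
              have : γ'.f m = none := Work.none_mono hγ'i (by omega)
              rw [hγ'm] at this
              exact nomatch this
            have h3 : Γ.f m = γ'.f m := hagree m (by rw [hγ'm]; exact Option.some_ne_none d)
            have h4 : (ofList l).f m = Γ.f m := by rw [hmatch m (le_of_lt hmi), hΓc m]
            rw [hαm, h3, hγ'm] at h4
            exact absurd (Option.some_injective _ h4) hcd.ne
          · have h5 : (ofList l).f i = γ'.f i := congrArg (fun x => ColexStr.f x i) heq
            have hαi : (ofList l).f i ≠ none := by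
              rw [hmatch i le_rfl, ← hΓc i]; exact hΓi
            exact hαi (h5.trans hγ'i)
        · -- letter difference : contradiction
          obtain ⟨v0, hv0, l, hlreach, hlen, hmatch⟩ :=
            Work.realize δ s lam hreach hlamex n {v}
              (by rw [← hΓc n, hΓn]; exact Option.some_ne_none b)
          have hαn : (ofList l).f n = some b := by rw [hmatch n le_rfl, ← hΓc n, hΓn]
          obtain rfl : v0 = v := Finset.mem_singleton.mp hv0
          have hub := hγ' l hlreach
          rcases hub with (⟨h1, _⟩ | ⟨m, c, d, hcd, hαm, hγ'm, hagm⟩) | heq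
          · have := h1 n (by rw [hαn]; exact Option.some_ne_none b)
            rw [hαn, hγ'n] at this
            exact absurd (Option.some_injective _ this) hab.ne
          · rcases lt_trichotomy m n with hmn | rfl | hmn
            · have h6 : (ofList l).f m = Γ.f m := by rw [hmatch m (by omega), hΓc m]
              rw [hαm, ← hag m hmn, hγ'm] at h6
              exact absurd (Option.some_injective _ h6) hcd.ne
            · rw [hαn] at hαm
              rw [hγ'n] at hγ'm
              obtain rfl := Option.some_injective _ hαm
              obtain rfl := Option.some_injective _ hγ'm
              exact lt_asymm hab hcd
            · have h7 := hagm n hmn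
              rw [hαn, hγ'n] at h7
              exact absurd (Option.some_injective _ h7) hab.ne'
          · have h8 : (ofList l).f n = γ'.f n := congrArg (fun x => ColexStr.f x n) heq
            rw [hαn, hγ'n] at h8
            exact absurd (Option.some_injective _ h8) hab.ne'
end

section
/- Let A = (Q, δ, s) be an input-consistent DFA whose source has no in-going transitions and in which every state is reachable from s. Then the relation ≺_A (where u ≺_A v iff α < β co-lexicographically for all α ∈ S_u and β ∈ S_v) is a co-lex order for A, and every co-lex order ≺ for A is contained in ≺_A (as a set of ordered pairs); consequently, ≺_A has minimum width among all co-lex orders for A. -/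
/-- The co-lexicographic order on finite strings: `α < β` iff either `α` is a
proper suffix of `β`, or `α = α'aγ`, `β = β'bγ` for a common suffix `γ`,
letters `a < b`, and (possibly empty) finite strings `α'`, `β'`. -/
def LColexLt {A : Type*} [LT A] (α β : List A) : Prop :=
  (α <:+ β ∧ α ≠ β) ∨
    ∃ (γ α' β' : List A) (a b : A),
      a < b ∧ α = α' ++ a :: γ ∧ β = β' ++ b :: γ

/-- `lt` is a co-lex order for the NFA `(Q, δ, s)`: a strict partial order in
which the source precedes all other states and which satisfies the two co-lex
axioms. -/
def IsColexOrderRel {Q A : Type*} [LT A] (δ : Q → A → Set Q) (s : Q)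
    (lt : Q → Q → Prop) : Prop :=
  (∀ x, ¬ lt x x) ∧
  (∀ x y z, lt x y → lt y z → lt x z) ∧
  (∀ v, v ≠ s → lt s v) ∧
  (∀ u u' v v' (a a' : A), v ∈ δ u a → v' ∈ δ u' a' →
    (a < a' → lt v v') ∧ (a = a' → lt v v' → u ≠ u' → lt u u'))

/-- The relation `≺_A`: `u ≺_A v` iff every string reaching `u` is
co-lexicographically smaller than every string reaching `v`. -/
def precA {Q A : Type*} [LT A] (δ : Q → A → Set Q) (s : Q) (u v : Q) : Prop :=
  ∀ α ∈ reach δ s u, ∀ β ∈ reach δ s v, LColexLt α β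

/-- The width of a strict partial order `lt` on the (finite) set of states:
the maximum size of an antichain, i.e. of a set of pairwise incomparable
states. -/
noncomputable def relWidth {Q : Type*} (lt : Q → Q → Prop) : ℕ :=
  sSup {n | ∃ T : Finset Q,
    (∀ u ∈ T, ∀ v ∈ T, u ≠ v → ¬ lt u v ∧ ¬ lt v u) ∧ T.card = n}


section Colex
variable {A : Type*} [LinearOrder A]

private lemma lex_of_app : ∀ (l m : List A), m ≠ [] → List.Lex (·<·) l (l ++ m)
  | [], m, h => by
      cases m with
      | nil => exact absurd rfl h
      | cons a t => exact List.Lex.nil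
  | a :: l, m, h => List.Lex.cons (lex_of_app l m h)

private lemma lex_of_mid {a b : A} (h : a < b) :
    ∀ (g x y : List A), List.Lex (·<·) (g ++ a :: x) (g ++ b :: y)
  | [], x, y => List.Lex.rel h
  | c :: g, x, y => List.Lex.cons (lex_of_mid h g x y)

private lemma lex_cases : ∀ {l m : List A}, List.Lex (·<·) l m →
    (l <+: m ∧ l ≠ m) ∨
      ∃ (p x y : List A) (a b : A), a < b ∧ l = p ++ a :: x ∧ m = p ++ b :: y := by
  intro l m h
  induction h with
  | nil => exact Or.inl ⟨⟨_, rfl⟩, by simp⟩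
  | @rel a l b m hab => exact Or.inr ⟨[], l, m, a, b, hab, rfl, rfl⟩
  | @cons a l m h ih =>
    rcases ih with ⟨⟨t, rfl⟩, hne⟩ | ⟨p, x, y, c, d, hcd, rfl, rfl⟩
    · exact Or.inl ⟨⟨t, rfl⟩, by simpa using hne⟩
    · exact Or.inr ⟨a :: p, x, y, c, d, hcd, rfl, rfl⟩

private lemma lcolex_iff {α β : List A} :
    LColexLt α β ↔ List.Lex (·<·) α.reverse β.reverse := by
  constructor
  · rintro (⟨⟨t, rfl⟩, hne⟩ | ⟨γ, α', β', a, b, hab, rfl, rfl⟩)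
    · have ht : t.reverse ≠ [] := by
        simp only [ne_eq, List.reverse_eq_nil_iff]
        rintro rfl; exact hne (by simp)
      simpa using lex_of_app α.reverse t.reverse ht
    · have h1 : (α' ++ a :: γ).reverse = γ.reverse ++ a :: α'.reverse := by simp
      have h2 : (β' ++ b :: γ).reverse = γ.reverse ++ b :: β'.reverse := by simp
      rw [h1, h2]
      exact lex_of_mid hab _ _ _
  · intro h
    rcases lex_cases h with ⟨hpre, hne⟩ | ⟨p, x, y, a, b, hab, h1, h2⟩
    · refine Or.inl ⟨List.reverse_prefix.mp hpre, fun hh => hne (by rw [hh])⟩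
    · refine Or.inr ⟨p.reverse, x.reverse, y.reverse, a, b, hab, ?_, ?_⟩
      · rw [← List.reverse_reverse α, h1]; simp
      · rw [← List.reverse_reverse β, h2]; simp

private lemma lcolex_irrefl (α : List A) : ¬ LColexLt α α := by
  rw [lcolex_iff]
  exact irrefl _

private lemma lcolex_trans {α β γ : List A} (h1 : LColexLt α β) (h2 : LColexLt β γ) :
    LColexLt α γ := by
  rw [lcolex_iff] at *
  exact List.lex_trans lt_trans h1 h2

private lemma lcolex_nil {β : List A} (h : β ≠ []) : LColexLt [] β :=
  Or.inl ⟨List.nil_suffix, fun hh => h hh.symm⟩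

private lemma lcolex_snoc_lt {α β : List A} {a b : A} (h : a < b) :
    LColexLt (α ++ [a]) (β ++ [b]) :=
  Or.inr ⟨[], α, β, a, b, h, rfl, rfl⟩

private lemma lcolex_snoc_same {α β : List A} (c : A) (h : LColexLt α β) :
    LColexLt (α ++ [c]) (β ++ [c]) := by
  rw [lcolex_iff] at *
  simpa using List.Lex.cons (a := c) h

private lemma lcolex_strip {α β : List A} (c : A)
    (h : LColexLt (α ++ [c]) (β ++ [c])) : LColexLt α β := by
  rw [lcolex_iff] at *
  simp only [List.reverse_append, List.reverse_singleton, List.singleton_append] at h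
  cases h with
  | rel h => exact absurd h (lt_irrefl c)
  | cons h => exact h

end Colex

section Delta
variable {Q A : Type*} {δ : Q → A → Set Q} {s : Q}

private lemma mem_deltaStr_cons {u v : Q} {b : A} {α : List A} :
    v ∈ deltaStr δ u (b :: α) ↔ ∃ x ∈ δ u b, v ∈ deltaStr δ x α := by
  simp [deltaStr]

private lemma mem_deltaStr_snoc : ∀ (α : List A) (u v : Q) (a : A),
    v ∈ deltaStr δ u (α ++ [a]) ↔ ∃ w ∈ deltaStr δ u α, v ∈ δ w a
  | [], u, v, a => by simp [deltaStr]
  | b :: α, u, v, a => by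
      simp only [List.cons_append, mem_deltaStr_cons, mem_deltaStr_snoc α]
      tauto

private lemma deltaStr_subsingleton (hdfa : ∀ u a, (δ u a).Subsingleton) :
    ∀ (α : List A) (u : Q), (deltaStr δ u α).Subsingleton
  | [], u => by simp [deltaStr]
  | a :: α, u => by
      intro x hx y hy
      simp only [deltaStr, Set.mem_iUnion, exists_prop] at hx hy
      obtain ⟨p, hp, hx⟩ := hx
      obtain ⟨q, hq, hy⟩ := hy
      cases hdfa u a hp hq
      exact deltaStr_subsingleton hdfa α p hx hy

private lemma deltaStr_source (hs : ∀ u a, s ∉ δ u a) :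
    ∀ (α : List A) (u : Q), s ∈ deltaStr δ u α → α = [] ∧ u = s
  | [], u, h => ⟨rfl, by simpa [deltaStr] using h.symm⟩
  | a :: α, u, h => by
      simp only [deltaStr, Set.mem_iUnion, exists_prop] at h
      obtain ⟨x, hx, h⟩ := h
      obtain ⟨-, rfl⟩ := deltaStr_source hs α x h
      exact absurd hx (hs u a)

private lemma reach_last (hic : ∀ v : Q, v ≠ s → ∃! a : A, ∃ u, v ∈ δ u a)
    {v : Q} (hv : v ≠ s) {α : List A} (hα : v ∈ deltaStr δ s α)
    {a : A} {u : Q} (hu : v ∈ δ u a) :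
    ∃ β w, α = β ++ [a] ∧ w ∈ deltaStr δ s β ∧ v ∈ δ w a := by
  rcases List.eq_nil_or_concat α with rfl | ⟨β, b, rfl⟩
  · exact absurd (by simpa [deltaStr] using hα) hv
  · rw [List.concat_eq_append] at hα
    obtain ⟨w, hw, hvw⟩ := (mem_deltaStr_snoc β s v b).mp hα
    obtain ⟨c, -, hcu⟩ := hic v hv
    have hb : b = c := hcu b ⟨w, hvw⟩
    have ha : a = c := hcu a ⟨u, hu⟩
    subst hb; subst ha
    exact ⟨β, w, by simp, hw, hvw⟩

end Delta

private lemma main_incl {Q A : Type*} [LinearOrder A] {δ : Q → A → Set Q} {s : Q}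
    (hdfa : ∀ u a, (δ u a).Subsingleton)
    (hs : ∀ u a, s ∉ δ u a)
    (hic : ∀ v : Q, v ≠ s → ∃! a : A, ∃ u, v ∈ δ u a)
    (R : Q → Q → Prop) (hR : IsColexOrderRel δ s R) :
    ∀ n (α : List A), α.length ≤ n → ∀ u v, R u v → α ∈ reach δ s u →
      ∀ β ∈ reach δ s v, LColexLt α β := by
  obtain ⟨hirr, htr, hsrc, hax⟩ := hR
  intro n
  induction n with
  | zero =>
    intro α hlen u v hRuv hα β hβ
    obtain rfl : α = [] := List.length_eq_zero_iff.mp (Nat.le_zero.mp hlen)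
    have hus : u = s := by simpa [reach, deltaStr] using hα
    rw [hus] at hRuv
    have hv : v ≠ s := by intro h; subst h; exact hirr _ hRuv
    have hβne : β ≠ [] := by rintro rfl; exact hv (by simpa [reach, deltaStr] using hβ)
    exact lcolex_nil hβne
  | succ n ih =>
    intro α hlen u v hRuv hα β hβ
    by_cases hu : u = s
    · obtain ⟨rfl, -⟩ := deltaStr_source hs α s (hu ▸ hα)
      rw [hu] at hRuv
      have hv : v ≠ s := by intro h; subst h; exact hirr _ hRuv
      have hβne : β ≠ [] := by rintro rfl; exact hv (by simpa [reach, deltaStr] using hβ)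
      exact lcolex_nil hβne
    · have hv : v ≠ s := by
        intro h; subst h; exact hirr u (htr u v u hRuv (hsrc u hu))
      obtain ⟨a, ⟨u₀, hu₀⟩, -⟩ := hic u hu
      obtain ⟨b, ⟨v₀, hv₀⟩, -⟩ := hic v hv
      obtain ⟨α₀, w, rfl, hw, hwa⟩ := reach_last hic hu hα hu₀
      obtain ⟨β₀, w', rfl, hw', hwb⟩ := reach_last hic hv hβ hv₀
      rcases lt_trichotomy a b with h | rfl | h
      · exact lcolex_snoc_lt h
      · have hne : w ≠ w' := by
          rintro rfl
          cases hdfa w a hwa hwb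
          exact hirr u hRuv
        have hRww' : R w w' := (hax w w' u v a a hwa hwb).2 rfl hRuv hne
        have hlen' : α₀.length ≤ n := by
          simp only [List.length_append, List.length_singleton] at hlen
          omega
        exact lcolex_snoc_same a (ih α₀ hlen' w w' hRww' hw β₀ hw')
      · exact absurd ((hax w' w v u b a hwb hwa).1 h)
          (fun hvu => hirr u (htr u v u hRuv hvu))

/-- For an input-consistent DFA (source without in-going transitions, all
states reachable), `≺_A` is a co-lex order, every co-lex order is contained in
`≺_A`, and consequently `≺_A` has minimum width among all co-lex orders. -/
theorem stmt15 {Q A : Type*} [Fintype Q] [Fintype A] [LinearOrder A]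
    (δ : Q → A → Set Q) (s : Q)
    (hdfa : ∀ u a, (δ u a).Subsingleton)
    (hs : ∀ u a, s ∉ δ u a)
    (hreach : ∀ v : Q, ∃ α, v ∈ deltaStr δ s α)
    (hic : ∀ v : Q, v ≠ s → ∃! a : A, ∃ u, v ∈ δ u a) :
    IsColexOrderRel δ s (precA δ s) ∧
    (∀ R : Q → Q → Prop, IsColexOrderRel δ s R → ∀ u v, R u v → precA δ s u v) ∧
    (∀ R : Q → Q → Prop, IsColexOrderRel δ s R →
      relWidth (precA δ s) ≤ relWidth R) := by
  have hsub := deltaStr_subsingleton (δ := δ) hdfa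
  have hcolex : IsColexOrderRel δ s (precA δ s) := by
    refine ⟨?_, ?_, ?_, ?_⟩
    · intro x hx
      obtain ⟨α, hα⟩ := hreach x
      exact lcolex_irrefl α (hx α hα α hα)
    · intro x y z hxy hyz α hα β hβ
      obtain ⟨γ, hγ⟩ := hreach y
      exact lcolex_trans (hxy α hα γ hγ) (hyz γ hγ β hβ)
    · intro v hv α hα β hβ
      obtain ⟨rfl, -⟩ := deltaStr_source hs α s hα
      have hβne : β ≠ [] := by rintro rfl; exact hv (by simpa [reach, deltaStr] using hβ)
      exact lcolex_nil hβne
    · intro u u' v v' a a' hv hv'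
      have hvs : v ≠ s := fun h => hs u a (h ▸ hv)
      have hvs' : v' ≠ s := fun h => hs u' a' (h ▸ hv')
      constructor
      · intro haa α hα β hβ
        obtain ⟨α₀, w, rfl, -, -⟩ := reach_last hic hvs hα hv
        obtain ⟨β₀, w', rfl, -, -⟩ := reach_last hic hvs' hβ hv'
        exact lcolex_snoc_lt haa
      · intro haa hvv' huu' α hα β hβ
        subst haa
        have hα' : (α ++ [a]) ∈ reach δ s v :=
          (mem_deltaStr_snoc α s v a).mpr ⟨u, hα, hv⟩
        have hβ' : (β ++ [a]) ∈ reach δ s v' :=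
          (mem_deltaStr_snoc β s v' a).mpr ⟨u', hβ, hv'⟩
        exact lcolex_strip a (hvv' (α ++ [a]) hα' (β ++ [a]) hβ')
  have hincl : ∀ R : Q → Q → Prop, IsColexOrderRel δ s R →
      ∀ u v, R u v → precA δ s u v := by
    intro R hR u v hRuv α hα β hβ
    exact main_incl hdfa hs hic R hR α.length α le_rfl u v hRuv hα β hβ
  refine ⟨hcolex, hincl, ?_⟩
  intro R hR
  apply csSup_le_csSup
  · refine ⟨Fintype.card Q, ?_⟩
    rintro n ⟨T, -, rfl⟩
    simpa using T.card_le_univ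
  · exact ⟨0, ∅, by simp, rfl⟩
  · rintro n ⟨T, hT, hc⟩
    refine ⟨T, fun u hu v hv hne => ?_, hc⟩
    obtain ⟨h1, h2⟩ := hT u hu v hv hne
    exact ⟨fun h => h1 (hincl R hR u v h), fun h => h2 (hincl R hR v u h)⟩
end
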